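/- arXiv:1403.6733 — 10 statements merged into one kernel-verified Lean document; each statement's English description precedes it below -/
import Mathlib

section
/- Let R ⊂ T be commutative rings with T = R[u] for some u, G a finite group of automorphisms of T with σ(R) ⊆ R for all σ ∈ G, and suppose |G| is a unit in T and u ∈ T^G. Then T^G = R^G[u]. Consequently, if R ⊂ T is a minimal ring extension, G is finite with |G| a unit in R, and R^G ≠ T^G, then R^G ⊂ T^G is a minimal ring extension. -/
/-- The fixed subring `T^G` of a group `G` acting on a commutative ring `T`. -/
def fixedSubring (G T : Type*) [CommRing T] [Group G] [MulSemiringAction G T] :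
    Subring T where
  carrier := MulAction.fixedPoints G T
  zero_mem' := by intro σ; simp
  one_mem' := by intro σ; simp
  add_mem' := by intro a b ha hb σ; simp [smul_add, ha σ, hb σ]
  neg_mem' := by intro a ha σ; simp [smul_neg, ha σ]
  mul_mem' := by intro a b ha hb σ; simp [smul_mul', ha σ, hb σ]

/-- `A ⊂ B` is a minimal ring extension: `A < B` and there is no ring strictly
between `A` and `B`. -/
def IsMinimalPair {T : Type*} [CommRing T] (A B : Subring T) : Prop :=
  A < B ∧ ∀ S : Subring T, A ≤ S → S ≤ B → S = A ∨ S = B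

/-- if `T = R[u]` with `u ∈ T^G`, `G` finite with `|G|` a unit in `T`,
then `T^G = R^G[u]`; consequently, if `R ⊂ T` is a minimal ring extension, `|G|` is
a unit in `R`, and `R^G ≠ T^G`, then `R^G ⊂ T^G` is a minimal ring extension. -/
theorem stmt4 (G T : Type*) [CommRing T] [Group G] [Finite G] [MulSemiringAction G T]
    (R : Subring T) (hinv : ∀ σ : G, ∀ r ∈ R, σ • r ∈ R) :
    (∀ u : T, IsUnit ((Nat.card G : T)) → u ∈ fixedSubring G T →
        Subring.closure (↑R ∪ {u}) = ⊤ →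
        Subring.closure (↑(R ⊓ fixedSubring G T) ∪ {u}) = fixedSubring G T)
    ∧ (IsUnit ((Nat.card G : R)) → IsMinimalPair R ⊤ →
        R ⊓ fixedSubring G T ≠ fixedSubring G T →
        IsMinimalPair (R ⊓ fixedSubring G T) (fixedSubring G T)) := by
  have _inst : Fintype G := Fintype.ofFinite G
  have fixed_sum : ∀ x : T, (∑ σ : G, σ • x) ∈ fixedSubring G T := by
    intro x τ
    rw [Finset.smul_sum]
    exact Fintype.sum_equiv (Equiv.mulLeft τ) _ _ (fun σ => smul_smul τ σ x)
  have part1 : ∀ u : T, IsUnit ((Nat.card G : T)) → u ∈ fixedSubring G T →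
      Subring.closure (↑R ∪ {u}) = ⊤ →
      Subring.closure (↑(R ⊓ fixedSubring G T) ∪ {u}) = fixedSubring G T := by
    intro u hunit hu hclos
    set S := Subring.closure (↑(R ⊓ fixedSubring G T) ∪ {u}) with hS
    have huS : u ∈ S := Subring.subset_closure (Or.inr rfl)
    have key : ∀ t ∈ fixedSubring G T, (Nat.card G : T) * t ∈ S := by
      intro t ht
      obtain ⟨p, hp⟩ : ∃ p : Polynomial ↥R, Polynomial.aeval u p = t := by
        have hle : Subring.closure (↑R ∪ {u}) ≤
            (Polynomial.aeval (R := ↥R) u).range.toSubring := by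
          apply Subring.closure_le.mpr
          rintro x (hx | rfl)
          · exact ⟨Polynomial.C ⟨x, hx⟩, by simp; rfl⟩
          · exact ⟨Polynomial.X, by simp⟩
        exact hle (by rw [hclos]; trivial)
      have h1 : (Nat.card G : T) * t = ∑ σ : G, σ • t := by
        rw [Finset.sum_congr rfl fun σ _ => ht σ, Finset.sum_const, Finset.card_univ,
          nsmul_eq_mul, Nat.card_eq_fintype_card]
      have h2 : ∀ σ : G, σ • t =
          ∑ i ∈ Finset.range (p.natDegree + 1), (σ • (↑(p.coeff i) : T)) * u ^ i := by
        intro σ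
        rw [← hp, Polynomial.aeval_eq_sum_range, Finset.smul_sum]
        refine Finset.sum_congr rfl fun i _ => ?_
        rw [show ((p.coeff i) • u ^ i : T) = (↑(p.coeff i) : T) * u ^ i from rfl,
          smul_mul', smul_pow', hu σ]
      rw [h1, Finset.sum_congr rfl fun σ _ => h2 σ, Finset.sum_comm]
      refine Subring.sum_mem _ fun i _ => ?_
      rw [← Finset.sum_mul]
      refine Subring.mul_mem _ (Subring.subset_closure (Or.inl ?_))
        (Subring.pow_mem _ huS i)
      exact ⟨Subring.sum_mem _ fun σ _ => hinv σ _ (p.coeff i).2, fixed_sum _⟩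
    apply le_antisymm
    · apply Subring.closure_le.mpr
      rintro x (hx | rfl)
      · exact hx.2
      · exact hu
    · intro t ht
      obtain ⟨v, hv⟩ := hunit.exists_right_inv
      have hvF : v ∈ fixedSubring G T := by
        intro σ
        have hn : σ • ((Nat.card G : T)) = (Nat.card G : T) :=
          map_natCast (MulSemiringAction.toRingHom G T σ) _
        have h1 : (Nat.card G : T) * (σ • v) = 1 := by
          rw [← hn, ← smul_mul', hv, smul_one]
        calc σ • v = ((Nat.card G : T) * v) * (σ • v) := by rw [hv, one_mul]
          _ = v * ((Nat.card G : T) * (σ • v)) := by ring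
          _ = v := by rw [h1, mul_one]
      have hk := key (t * v) (Subring.mul_mem _ ht hvF)
      have heq : (Nat.card G : T) * (t * v) = t := by
        calc (Nat.card G : T) * (t * v) = t * ((Nat.card G : T) * v) := by ring
          _ = t := by rw [hv, mul_one]
      rwa [heq] at hk
  refine ⟨part1, fun hu hmin hne => ⟨lt_of_le_of_ne inf_le_right hne, fun S hS1 hS2 => ?_⟩⟩
  by_cases hSeq : S = R ⊓ fixedSubring G T
  · exact Or.inl hSeq
  · right
    obtain ⟨u, huS, huRF⟩ : ∃ u ∈ S, u ∉ R ⊓ fixedSubring G T := by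
      by_contra h
      push_neg at h
      exact hSeq (le_antisymm (fun x hx => h x hx) hS1)
    have huF : u ∈ fixedSubring G T := hS2 huS
    have huR : u ∉ R := fun hr => huRF ⟨hr, huF⟩
    have hRle : R ≤ Subring.closure (↑R ∪ {u}) :=
      fun x hx => Subring.subset_closure (Or.inl hx)
    have hclos : Subring.closure (↑R ∪ {u}) = ⊤ := by
      rcases hmin.2 _ hRle le_top with h | h
      · exact absurd (h ▸ Subring.subset_closure (Or.inr rfl)) huR
      · exact h
    have hunitT : IsUnit ((Nat.card G : T)) := by
      have := hu.map R.subtype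
      rwa [map_natCast] at this
    have hFS : fixedSubring G T ≤ S := by
      rw [← part1 u hunitT huF hclos]
      apply Subring.closure_le.mpr
      rintro x (hx | rfl)
      · exact hS1 hx
      · exact huS
    exact le_antisymm hS2 hFS
end

section
/- Let T be an integral domain and G a locally finite group of automorphisms of T such that char(T) does not divide n_t for all t ∈ T, with R ⊆ T a G-invariant subring. If t ∈ T^G satisfies t = r_1 u_1 + ⋯ + r_k u_k with r_i ∈ R and u_i ∈ T^G, then there exist positive integers m, m_1, …, m_k and elements r_i' ∈ R^G such that 0 ≠ m·t = m_1 r_1' u_1 + ⋯ + m_k r_k' u_k. -/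
section aux
set_option linter.unusedSectionVars false
variable {G T : Type*} [CommRing T] [IsDomain T] [Group G] [MulSemiringAction G T]

lemma orbit_smul_mem (σ : G) {a s : T} (hs : s ∈ MulAction.orbit G a) :
    σ • s ∈ MulAction.orbit G a := by
  obtain ⟨g, rfl⟩ := hs
  exact ⟨σ * g, (mul_smul σ g a)⟩

lemma tr_fixed (hlf : ∀ t : T, (MulAction.orbit G t).Finite) (a : T) :
    (∑ s ∈ (hlf a).toFinset, s) ∈ fixedSubring G T := by
  intro σ
  show σ • _ = _
  rw [Finset.smul_sum]
  refine Finset.sum_nbij' (fun s => σ • s) (fun s => σ⁻¹ • s) ?_ ?_ ?_ ?_ ?_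
  · intro s hs
    rw [Set.Finite.mem_toFinset] at hs ⊢
    exact orbit_smul_mem σ hs
  · intro s hs
    rw [Set.Finite.mem_toFinset] at hs ⊢
    exact orbit_smul_mem σ⁻¹ hs
  · intro s _; simp
  · intro s _; simp
  · intro s _; rfl

lemma card_ne_zero_cast (hchar : ∀ t : T, ¬ (ringChar T : ℕ) ∣ Nat.card (MulAction.orbit G t))
    (hlf : ∀ t : T, (MulAction.orbit G t).Finite) (a : T) :
    (((hlf a).toFinset.card : T) ≠ 0) := by
  haveI := ringChar.charP T
  rw [Ne, CharP.cast_eq_zero_iff T (ringChar T)]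
  have : Nat.card (MulAction.orbit G a) = (hlf a).toFinset.card := by
    rw [Nat.card_coe_set_eq, Set.ncard_eq_toFinset_card _ (hlf a)]
  rw [← this]
  exact hchar a

theorem stmt5aux
    (hlf : ∀ t : T, (MulAction.orbit G t).Finite)
    (hchar : ∀ t : T, ¬ (ringChar T : ℕ) ∣ Nat.card (MulAction.orbit G t))
    (R : Subring T) (hinv : ∀ σ : G, ∀ r ∈ R, σ • r ∈ R) :
    ∀ (k : ℕ) (t : T), t ∈ fixedSubring G T → t ≠ 0 →
    ∀ (r u : Fin k → T), (∀ i, r i ∈ R) → (∀ i, u i ∈ fixedSubring G T) →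
    t = ∑ i, r i * u i →
    ∃ (m : ℕ) (m' : Fin k → ℕ) (r' : Fin k → T),
      0 < m ∧ (∀ i, 0 < m' i) ∧ (∀ i, r' i ∈ R ⊓ fixedSubring G T) ∧
      (m : T) * t ≠ 0 ∧ (m : T) * t = ∑ i, (m' i : T) * r' i * u i := by
  intro k
  induction k with
  | zero =>
    intro t ht ht0 r u hr hu heq
    simp only [Finset.univ_eq_empty, Finset.sum_empty] at heq
    exact absurd heq ht0
  | succ k ih =>
    intro t ht ht0 r u hr hu heq
    set a := r 0 with ha
    set S := (hlf a).toFinset with hS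
    set n := S.card with hn
    have hnT : (n : T) ≠ 0 := card_ne_zero_cast hchar hlf a
    -- choice of group elements
    have hex : ∀ x : {s // s ∈ S}, ∃ σ : G, σ • a = x.1 := by
      intro x
      have h2 : x.1 ∈ (hlf a).toFinset := x.2
      rw [Set.Finite.mem_toFinset] at h2
      exact h2
    choose g hg using hex
    -- trace
    set Tr := ∑ s ∈ S, s with hTr
    have hTrfix : Tr ∈ fixedSubring G T := tr_fixed hlf a
    have hTrR : Tr ∈ R := by
      rw [hTr]
      apply Subring.sum_mem
      intro s hs
      rw [hS, Set.Finite.mem_toFinset] at hs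
      obtain ⟨σ, rfl⟩ := hs
      exact hinv σ _ (hr 0)
    -- summed equation
    have key : (n : T) * t = ∑ x ∈ S.attach, ∑ i, (g x • r i) * u i := by
      have h1 : ∀ x : {s // s ∈ S}, g x • t = ∑ i, (g x • r i) * u i := by
        intro x
        rw [heq, Finset.smul_sum]
        congr 1
        ext i
        rw [smul_mul', hu i (g x)]
      calc (n : T) * t = ∑ _x ∈ S.attach, t := by
            rw [Finset.sum_const, Finset.card_attach, ← hn, nsmul_eq_mul]
        _ = ∑ x ∈ S.attach, ∑ i, (g x • r i) * u i := by
            refine Finset.sum_congr rfl fun x _ => ?_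
            rw [← h1 x, ht (g x)]
    have key2 : (n : T) * t = ∑ i, (∑ x ∈ S.attach, g x • r i) * u i := by
      rw [key, Finset.sum_comm]
      congr 1
      ext i
      rw [Finset.sum_mul]
    have hTrsum : ∑ x ∈ S.attach, g x • r 0 = Tr := by
      rw [hTr, ← Finset.sum_attach S (fun s => s)]
      exact Finset.sum_congr rfl fun x _ => by rw [← ha, hg x]
    set t' := (n : T) * t - Tr * u 0 with ht'
    have ht'eq : t' = ∑ i : Fin k, (∑ x ∈ S.attach, g x • r i.succ) * u i.succ := by
      rw [ht', key2, Fin.sum_univ_succ, hTrsum]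
      ring
    have ht'fix : t' ∈ fixedSubring G T := by
      refine Subring.sub_mem _ (Subring.mul_mem _ (natCast_mem _ n) ht)
        (Subring.mul_mem _ hTrfix (hu 0))
    have hsR : ∀ i : Fin k, (∑ x ∈ S.attach, g x • r i.succ) ∈ R := by
      intro i
      exact Subring.sum_mem _ fun x _ => hinv (g x) _ (hr i.succ)
    by_cases h0 : t' = 0
    · -- n * t = Tr * u 0
      refine ⟨n, fun _ => 1, Fin.cons Tr (fun _ => 0), ?_, fun _ => Nat.one_pos, ?_, ?_, ?_⟩
      · rw [hn]
        refine Finset.card_pos.mpr ⟨a, ?_⟩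
        rw [hS, Set.Finite.mem_toFinset]
        exact MulAction.mem_orbit_self a
      · intro i
        refine Fin.cases ?_ ?_ i
        · exact ⟨hTrR, hTrfix⟩
        · intro j; simp only [Fin.cons_succ]; exact ⟨Subring.zero_mem _, Subring.zero_mem _⟩
      · exact mul_ne_zero hnT ht0
      · have heq2 : (n : T) * t = Tr * u 0 := by
          have h := h0
          rw [ht'] at h
          exact sub_eq_zero.mp h
        rw [heq2, Fin.sum_univ_succ]
        simp
    · obtain ⟨M, M', r', hM, hM', hr', hMne, hMeq⟩ :=
        ih t' ht'fix h0 (fun i => ∑ x ∈ S.attach, g x • r i.succ) (fun i => u i.succ)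
          hsR (fun i => hu i.succ) ht'eq
      have hMT : (M : T) ≠ 0 := fun h => hMne (by rw [h, zero_mul])
      refine ⟨M * n, Fin.cons M M', Fin.cons Tr r', Nat.mul_pos hM ?_, ?_, ?_, ?_, ?_⟩
      · rw [hn]
        refine Finset.card_pos.mpr ⟨a, ?_⟩
        rw [hS, Set.Finite.mem_toFinset]
        exact MulAction.mem_orbit_self a
      · intro i
        refine Fin.cases ?_ ?_ i
        · exact hM
        · intro j; simpa using hM' j
      · intro i
        refine Fin.cases ?_ ?_ i
        · exact ⟨hTrR, hTrfix⟩
        · intro j; simpa using hr' j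
      · push_cast
        exact mul_ne_zero (mul_ne_zero hMT hnT) ht0
      · rw [Fin.sum_univ_succ]
        simp only [Fin.cons_zero, Fin.cons_succ]
        push_cast
        rw [← hMeq, ht']
        ring

end aux

/-- orbit-averaging lemma in a domain whose characteristic divides
no orbit size: a fixed element expressible as an `R`-combination of fixed
elements is, up to nonzero integer multiples, an `R^G`-combination of them. -/
theorem stmt5 (G T : Type*) [CommRing T] [IsDomain T] [Group G] [MulSemiringAction G T]
    (hlf : ∀ t : T, (MulAction.orbit G t).Finite)
    (hchar : ∀ t : T, ¬ (ringChar T : ℕ) ∣ Nat.card (MulAction.orbit G t))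
    (R : Subring T) (hinv : ∀ σ : G, ∀ r ∈ R, σ • r ∈ R)
    (t : T) (ht : t ∈ fixedSubring G T) (ht0 : t ≠ 0)
    (k : ℕ) (r u : Fin k → T) (hr : ∀ i, r i ∈ R)
    (hu : ∀ i, u i ∈ fixedSubring G T)
    (heq : t = ∑ i, r i * u i) :
    ∃ (m : ℕ) (m' : Fin k → ℕ) (r' : Fin k → T),
      0 < m ∧ (∀ i, 0 < m' i) ∧ (∀ i, r' i ∈ R ⊓ fixedSubring G T) ∧
      (m : T) * t ≠ 0 ∧ (m : T) * t = ∑ i, (m' i : T) * r' i * u i := by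
  exact stmt5aux hlf hchar R hinv k t ht ht0 r u hr hu heq
end

section
/- Let R ⊂ T be commutative rings with a critical ideal P (i.e., P = Rad_R((R :_R t)) for all t ∈ T \ R), and let G be a group of automorphisms of T leaving R invariant. If R^G ≠ T^G, then P ∩ R^G is the critical ideal of the extension R^G ⊂ T^G, i.e., P ∩ R^G = Rad_{R^G}((R^G :_{R^G} t)) for all t ∈ T^G \ R^G. -/
/-- if `P` is the critical ideal of `R ⊂ T` (so `P = Rad_R((R :_R t))`
for all `t ∈ T \ R`) and `R^G ≠ T^G`, then `P ∩ R^G` is the critical ideal of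
`R^G ⊂ T^G`. -/
theorem stmt6 (G T : Type*) [CommRing T] [Group G] [MulSemiringAction G T]
    (R : Subring T) (hinv : ∀ σ : G, ∀ r ∈ R, σ • r ∈ R)
    (P : Set T) (hPR : P ⊆ R)
    (hcrit : ∀ t : T, t ∉ R → P = {x : T | x ∈ R ∧ ∃ n : ℕ, x ^ n * t ∈ R})
    (hne : R ⊓ fixedSubring G T ≠ fixedSubring G T) :
    ∀ t : T, t ∈ fixedSubring G T → t ∉ R ⊓ fixedSubring G T →
      P ∩ ↑(R ⊓ fixedSubring G T)
        = {x : T | x ∈ R ⊓ fixedSubring G T ∧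
            ∃ n : ℕ, x ^ n * t ∈ R ⊓ fixedSubring G T} := by
  intro t htfix htR
  have htnR : t ∉ R := fun h => htR ⟨h, htfix⟩
  have hP := hcrit t htnR
  ext x
  constructor
  · rintro ⟨hxP, hxRG⟩
    have hx := hP ▸ hxP
    obtain ⟨hxR, n, hn⟩ := hx
    refine ⟨hxRG, n, hn, ?_⟩
    intro σ
    have hxfix : ∀ σ : G, σ • x = x := hxRG.2
    simp [smul_mul', smul_pow, hxfix σ, htfix σ]
  · rintro ⟨hxRG, n, hnR, hnfix⟩
    refine ⟨?_, hxRG⟩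
    rw [hP]
    exact ⟨hxRG.1, n, hnR⟩
end

section
/- Let R ⊆ T be commutative rings, G a locally finite group of automorphisms of T leaving R invariant, with R^G ≠ T^G. Let M be a maximal ideal of R with σ(M) = M for all σ ∈ G, and set 𝔪 := M ∩ R^G. If (R, M) is a valuation pair of T, then (R^G, 𝔪) is a valuation pair of T^G. -/
open Polynomial

section Aux
variable {G T : Type*} [CommRing T] [Group G] [MulSemiringAction G T]

/-- The orbit finset is stable under the action. -/
lemma orbitFinset_image_smul [DecidableEq T] (hlf : ∀ t : T, (MulAction.orbit G t).Finite)
    (t : T) (σ : G) :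
    Finset.image (fun u => σ • u) (hlf t).toFinset = (hlf t).toFinset := by
  ext u
  simp only [Finset.mem_image, Set.Finite.mem_toFinset, MulAction.mem_orbit_iff]
  constructor
  · rintro ⟨v, ⟨g, rfl⟩, rfl⟩
    exact ⟨σ * g, mul_smul σ g t⟩
  · rintro ⟨g, rfl⟩
    exact ⟨σ⁻¹ • g • t, ⟨σ⁻¹ * g, mul_smul _ _ _⟩, smul_inv_smul σ (g • t)⟩

/-- Any element of `R` is integral over any subring containing `R ⊓ fixedSubring G T`. -/
lemma integral_of_orbit_finite (hlf : ∀ t : T, (MulAction.orbit G t).Finite)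
    {R : Subring T} (hinv : ∀ σ : G, ∀ r ∈ R, σ • r ∈ R)
    (S : Subring T) (hS : R ⊓ fixedSubring G T ≤ S)
    {x : T} (hx : x ∈ R) : IsIntegral S x := by
  classical
  cases subsingleton_or_nontrivial T with
  | inl h => exact ⟨X, monic_X, Subsingleton.elim _ _⟩
  | inr h =>
  set os : Finset T := (hlf x).toFinset with hos
  have hmem : ∀ t ∈ os, t ∈ MulAction.orbit G x := fun t ht => (hlf x).mem_toFinset.mp ht
  have hmemR : ∀ t ∈ os, t ∈ R := by
    intro t ht
    obtain ⟨g, rfl⟩ := hmem t ht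
    exact hinv g x hx
  set q : T[X] := ∏ t ∈ os, (X - C t) with hq
  have hqmonic : q.Monic := monic_prod_of_monic _ _ fun t _ => monic_X_sub_C t
  have hqeval : q.eval x = 0 := by
    rw [hq, eval_prod]
    exact Finset.prod_eq_zero ((hlf x).mem_toFinset.mpr (MulAction.mem_orbit_self x))
      (by simp)
  -- coefficients lie in R
  have hcoeffR : ∀ n, q.coeff n ∈ R := by
    intro n
    have h1 : q = map R.subtype (∏ t ∈ os.attach, (X - C (⟨t.1, hmemR t.1 t.2⟩ : R))) := by
      rw [Polynomial.map_prod]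
      simp only [Polynomial.map_sub, map_X, map_C]
      rw [hq, ← Finset.prod_attach os fun t => X - C t]
      rfl
    rw [h1, coeff_map]
    exact SetLike.coe_mem _
  -- coefficients are fixed
  have hcoefffix : ∀ n, ∀ σ : G, σ • q.coeff n = q.coeff n := by
    intro n σ
    have hmap : map (MulSemiringAction.toRingHom G T σ) q = q := by
      rw [hq, Polynomial.map_prod]
      have h2 : ∀ t : T, map (MulSemiringAction.toRingHom G T σ) (X - C t) = X - C (σ • t) := by
        intro t; simp [Polynomial.map_sub]
      rw [Finset.prod_congr rfl fun t _ => h2 t]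
      calc ∏ t ∈ os, (X - C (σ • t)) = ∏ t ∈ Finset.image (fun u => σ • u) os, (X - C t) := by
            rw [Finset.prod_image fun a _ b _ hh => MulAction.injective σ hh]
        _ = ∏ t ∈ os, (X - C t) := by rw [hos, orbitFinset_image_smul hlf x σ]
    conv_rhs => rw [← hmap]
    rw [coeff_map]
    rfl
  have hlift : q ∈ lifts (S.subtype) := by
    rw [lifts_iff_coeff_lifts]
    intro n
    exact ⟨⟨q.coeff n, hS ⟨hcoeffR n, fun σ => hcoefffix n σ⟩⟩, rfl⟩
  obtain ⟨p, hpmap, _, hpmonic⟩ := lifts_and_degree_eq_and_monic hlift hqmonic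
  refine ⟨p, hpmonic, ?_⟩
  rw [eval₂_eq_eval_map]
  rw [show p.map (algebraMap S T) = q from hpmap]
  exact hqeval

end Aux

/-- `(A, P)` is a valuation pair of `B` (for subrings `A ≤ B` of an ambient ring):
whenever `S` is an intermediate ring containing a prime lying over `P`, `S = A`. -/
def IsValuationPairWithin {T : Type*} [CommRing T] (A B : Subring T)
    (P : Ideal A) : Prop :=
  ∀ (S : Subring T) (hAS : A ≤ S), S ≤ B →
    (∃ Q : Ideal S, Q.IsPrime ∧ Q.comap (Subring.inclusion hAS) = P) → S = A

/-- for a locally finite action with `R^G ≠ T^G`, a `G`-stable maximal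
ideal `M` of `R`, and `𝔪 := M ∩ R^G`: if `(R, M)` is a valuation pair of `T`, then
`(R^G, 𝔪)` is a valuation pair of `T^G`. -/
theorem stmt8 (G T : Type*) [CommRing T] [Group G] [MulSemiringAction G T]
    (hlf : ∀ t : T, (MulAction.orbit G t).Finite)
    (R : Subring T) (hinv : ∀ σ : G, ∀ r ∈ R, σ • r ∈ R)
    (hne : R ⊓ fixedSubring G T ≠ fixedSubring G T)
    (M : Ideal R) (hMmax : M.IsMaximal)
    (hMinv : ∀ σ : G, (fun x : T => σ • x) '' (Subtype.val '' (M : Set R))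
        = Subtype.val '' (M : Set R))
    (hvp : IsValuationPairWithin R ⊤ M) :
    IsValuationPairWithin (R ⊓ fixedSubring G T) (fixedSubring G T)
      (M.comap (Subring.inclusion (inf_le_left : R ⊓ fixedSubring G T ≤ R))) := by
  classical
  rintro S hAS hSF ⟨Q, hQp, hQc⟩
  haveI := hQp
  set A : Subring T := R ⊓ fixedSubring G T with hA
  set W : Subring T := S ⊔ R with hW
  have hSW : S ≤ W := le_sup_left
  have hRW : R ≤ W := le_sup_right
  -- every element of W is integral over S
  have hWint : ∀ x : T, x ∈ W → IsIntegral S x := by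
    intro x hxW
    have hle : W ≤ (integralClosure S T).toSubring := by
      rw [hW]
      apply sup_le
      · intro s hs
        exact isIntegral_algebraMap (x := (⟨s, hs⟩ : S))
      · intro r hr
        exact integral_of_orbit_finite hlf hinv S hAS hr
    exact hle hxW
  letI algSW : Algebra S W := (Subring.inclusion hSW).toAlgebra
  haveI : Algebra.IsIntegral S W := by
    constructor
    intro w
    obtain ⟨p, pm, hp⟩ := hWint w.1 w.2
    refine ⟨p, pm, ?_⟩
    have h1 : W.subtype (Polynomial.eval₂ (algebraMap S W) w p)
        = Polynomial.eval₂ (algebraMap S T) w.1 p := by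
      rw [Polynomial.hom_eval₂]
      rfl
    exact Subtype.ext (h1.trans hp)
  obtain ⟨Q', -, hQ'p, hQ'c⟩ := Ideal.exists_ideal_over_prime_of_isIntegral Q (⊥ : Ideal W)
    (by
      intro s hs
      have h0 : (Subring.inclusion hSW) s = 0 := Ideal.mem_bot.mp (Ideal.mem_comap.mp hs)
      have hs0 : (s : T) = 0 := congrArg Subtype.val h0
      have : s = 0 := Subtype.ext hs0
      rw [this]; exact Q.zero_mem)
  haveI := hQ'p
  set P : Ideal R := Q'.comap (Subring.inclusion hRW) with hP
  haveI hPp : P.IsPrime := Ideal.IsPrime.comap _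
  -- membership translation
  have hPA : ∀ (t : T) (htR : t ∈ R) (htF : t ∈ fixedSubring G T),
      ((⟨t, htR⟩ : R) ∈ P ↔ (⟨t, htR⟩ : R) ∈ M) := by
    intro t htR htF
    have h1 : (⟨t, htR⟩ : R) ∈ P ↔ (⟨t, hAS ⟨htR, htF⟩⟩ : S) ∈ Q := by
      rw [← hQ'c]; exact Iff.rfl
    have h2 : (⟨t, hAS ⟨htR, htF⟩⟩ : S) ∈ Q ↔ (⟨t, htR⟩ : R) ∈ M := by
      constructor
      · intro hh
        have h3 : (⟨t, ⟨htR, htF⟩⟩ : A) ∈ M.comap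
            (Subring.inclusion (inf_le_left : R ⊓ fixedSubring G T ≤ R)) := by
          rw [← hQc]; exact hh
        exact h3
      · intro hh
        have h3 : (⟨t, ⟨htR, htF⟩⟩ : A) ∈ Q.comap (Subring.inclusion hAS) := by
          rw [hQc]; exact hh
        exact h3
    exact h1.trans h2
  -- P ≤ M via the orbit product argument
  have hPM : P ≤ M := by
    intro x hxP
    set t : T := (x : T) with ht
    set os : Finset T := (hlf t).toFinset with hos
    have htos : t ∈ os := (hlf t).mem_toFinset.mpr (MulAction.mem_orbit_self t)
    have hmemR : ∀ u ∈ os, u ∈ R := by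
      intro u hu
      obtain ⟨g, rfl⟩ := (hlf t).mem_toFinset.mp hu
      exact hinv g t x.2
    set yT : T := ∏ u ∈ os, u with hy
    have hyR : yT ∈ R := prod_mem fun u hu => hmemR u hu
    have hyF : yT ∈ fixedSubring G T := by
      intro σ
      show σ • yT = yT
      have h4 : σ • yT = ∏ u ∈ os, σ • u :=
        map_prod (MulSemiringAction.toRingHom G T σ) (fun u => u) os
      rw [h4]
      calc ∏ u ∈ os, σ • u = ∏ u ∈ Finset.image (fun u => σ • u) os, u := by
            rw [Finset.prod_image fun a _ b _ hh => MulAction.injective σ hh]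
        _ = yT := by rw [hos, orbitFinset_image_smul hlf t σ]
    have hyP : (⟨yT, hyR⟩ : R) ∈ P := by
      have hrestR : (∏ u ∈ os.erase t, u) ∈ R :=
        prod_mem fun u hu => hmemR u (Finset.mem_of_mem_erase hu)
      have h5 : (⟨yT, hyR⟩ : R) = x * ⟨∏ u ∈ os.erase t, u, hrestR⟩ :=
        Subtype.ext (Finset.mul_prod_erase os (fun u => u) htos).symm
      rw [h5]
      exact P.mul_mem_right _ hxP
    have hyM : (⟨yT, hyR⟩ : R) ∈ M := (hPA yT hyR hyF).mp hyP
    haveI : M.IsPrime := hMmax.isPrime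
    have hprod : (∏ u ∈ os.attach, (⟨u.1, hmemR u.1 u.2⟩ : R)) ∈ M := by
      have h6 : (∏ u ∈ os.attach, (⟨u.1, hmemR u.1 u.2⟩ : R)) = ⟨yT, hyR⟩ := by
        apply Subtype.ext
        rw [show ((∏ u ∈ os.attach, (⟨u.1, hmemR u.1 u.2⟩ : R) : R) : T)
            = ∏ u ∈ os.attach, (u.1 : T) from map_prod R.subtype _ os.attach]
        exact Finset.prod_attach os fun u => u
      rw [h6]; exact hyM
    obtain ⟨u, -, huM⟩ := Ideal.IsPrime.prod_mem_iff.mp hprod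
    obtain ⟨g, hgu⟩ := (hlf t).mem_toFinset.mp u.2
    have hval : u.1 ∈ Subtype.val '' (M : Set R) := ⟨_, huM, rfl⟩
    have himg : g⁻¹ • u.1 ∈ Subtype.val '' (M : Set R) := by
      rw [← hMinv g⁻¹]
      exact ⟨u.1, hval, rfl⟩
    have hgt : g⁻¹ • u.1 = t := by rw [← hgu]; exact inv_smul_smul g t
    rw [hgt] at himg
    obtain ⟨m, hmM, hmv⟩ := himg
    have : m = x := Subtype.ext hmv
    rwa [this] at hmM
  -- maximality transfer
  letI algAR : Algebra A R := (Subring.inclusion (inf_le_left : A ≤ R)).toAlgebra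
  haveI : Algebra.IsIntegral A R := by
    constructor
    intro r
    obtain ⟨p, pm, hp⟩ := integral_of_orbit_finite hlf hinv A le_rfl r.2
    refine ⟨p, pm, ?_⟩
    have h1 : R.subtype (Polynomial.eval₂ (algebraMap A R) r p)
        = Polynomial.eval₂ (algebraMap A T) r.1 p := by
      rw [Polynomial.hom_eval₂]
      rfl
    exact Subtype.ext (h1.trans hp)
  haveI := hMmax
  have hmm : (M.comap (algebraMap A R)).IsMaximal :=
    Ideal.isMaximal_comap_of_isIntegral_of_isMaximal M
  have hPcomap : P.comap (algebraMap A R) = M.comap (algebraMap A R) := by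
    ext a
    simp only [Ideal.mem_comap]
    exact hPA a.1 a.2.1 a.2.2
  have hPmax : P.IsMaximal :=
    Ideal.isMaximal_of_isIntegral_of_isMaximal_comap P (hPcomap ▸ hmm)
  have hPeqM : P = M := hPmax.eq_of_le hMmax.ne_top hPM
  have hWR : W = R := hvp W hRW le_top ⟨Q', hQ'p, hPeqM⟩
  exact le_antisymm (le_inf (le_trans hSW (le_of_eq hWR)) hSF) hAS
end

section
/- Let R ⊂ T be an integrally closed minimal ring extension of commutative rings, and G a locally finite group of automorphisms of T leaving R invariant. Then R^G ≠ T^G. In particular, if t ∈ T \ R, then the orbit product t̃ = ∏_{t_i ∈ O_t} t_i lies in T^G \ R^G. -/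
/-- `t` is integral over the subring `A`: it is a root of a monic polynomial
with coefficients in `A`. -/
def IntegralOver {T : Type*} [CommRing T] (A : Subring T) (t : T) : Prop :=
  ∃ p : Polynomial T, p.Monic ∧ (∀ i, p.coeff i ∈ A) ∧ Polynomial.eval t p = 0

open Polynomial Finset in
lemma key {T : Type*} [CommRing T] (R : Subring T) (hmin : IsMinimalPair R ⊤)
    (hic : ∀ t : T, IntegralOver R t → t ∈ R) {x y : T}
    (hx : x ∉ R) (hy : y ∉ R) : x * y ∉ R := by
  intro hxy
  -- R[x] = ⊤
  have hle : R ≤ (Algebra.adjoin ↥R {x}).toSubring := by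
    intro r hr
    exact (Algebra.adjoin ↥R {x}).algebraMap_mem ⟨r, hr⟩
  have htop : (Algebra.adjoin ↥R {x}).toSubring = ⊤ := by
    rcases hmin.2 _ hle le_top with h | h
    · exact absurd (h ▸ Algebra.subset_adjoin (Set.mem_singleton x)) hx
    · exact h
  have hyS : y ∈ Algebra.adjoin ↥R {x} := by
    have : y ∈ ((Algebra.adjoin ↥R {x}).toSubring : Set T) := by
      rw [htop]; trivial
    exact this
  rw [Algebra.adjoin_singleton_eq_range_aeval] at hyS
  obtain ⟨p, hp'⟩ := hyS
  have hp : (Polynomial.aeval x) p = y := hp'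
  set n := p.natDegree with hn
  -- y = ∑ i in range (n+1), ↑(p.coeff i) * x ^ i
  have hysum : y = ∑ i ∈ range (n + 1), (p.coeff i : T) * x ^ i := by
    rw [← hp, Polynomial.aeval_eq_sum_range]
    exact Finset.sum_congr rfl fun i _ => by rw [Algebra.smul_def]; rfl
  -- key identity
  have hkey : y ^ (n + 1) = ∑ i ∈ range (n + 1), (p.coeff i : T) * (x * y) ^ i * y ^ (n - i) := by
    calc y ^ (n + 1) = (∑ i ∈ range (n + 1), (p.coeff i : T) * x ^ i) * y ^ n := by
          rw [← hysum, pow_succ, mul_comm]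
      _ = ∑ i ∈ range (n + 1), (p.coeff i : T) * (x * y) ^ i * y ^ (n - i) := by
          rw [Finset.sum_mul]
          refine Finset.sum_congr rfl fun i hi => ?_
          have hi' : i ≤ n := Nat.lt_succ_iff.mp (Finset.mem_range.mp hi)
          rw [mul_pow, mul_assoc, mul_assoc, mul_assoc]
          congr 1
          congr 1
          rw [← pow_add]
          congr 1
          omega
  apply hy
  apply hic
  refine ⟨X ^ (n + 1) - ∑ i ∈ range (n + 1),
      C ((p.coeff i : T) * (x * y) ^ i) * X ^ (n - i), ?_, ?_, ?_⟩
  · apply Polynomial.monic_X_pow_sub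
    refine lt_of_le_of_lt (Polynomial.degree_sum_le _ _) ?_
    refine lt_of_le_of_lt (Finset.sup_le fun i hi => ?_)
      (show (n : WithBot ℕ) < (n + 1 : ℕ) by exact_mod_cast Nat.lt_succ_self n)
    refine le_trans (Polynomial.degree_C_mul_X_pow_le _ _) ?_
    exact_mod_cast Nat.cast_le.mpr (Nat.sub_le n i)
  · intro j
    rw [Polynomial.coeff_sub, Polynomial.coeff_X_pow, Polynomial.finset_sum_coeff]
    refine Subring.sub_mem _ ?_ ?_
    · split <;> simp [Subring.one_mem, Subring.zero_mem]
    · refine Subring.sum_mem _ fun i _ => ?_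
      rw [Polynomial.coeff_C_mul, Polynomial.coeff_X_pow]
      split
      · simp only [mul_one]
        exact R.mul_mem (SetLike.coe_mem _) (R.pow_mem hxy i)
      · simp [Subring.zero_mem]
  · rw [Polynomial.eval_sub, Polynomial.eval_pow, Polynomial.eval_X,
      Polynomial.eval_finset_sum]
    simp only [Polynomial.eval_mul, Polynomial.eval_C, Polynomial.eval_pow, Polynomial.eval_X]
    rw [← hkey, sub_self]

theorem orbitProdAux (G T : Type*) [CommRing T] [Group G] [MulSemiringAction G T]
    (hlf : ∀ t : T, (MulAction.orbit G t).Finite)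
    (R : Subring T) (hinv : ∀ σ : G, ∀ r ∈ R, σ • r ∈ R)
    (hmin : IsMinimalPair R ⊤)
    (hic : ∀ t : T, IntegralOver R t → t ∈ R) :
    True ∧
    ∀ t : T, t ∉ R →
      ((∏ x ∈ (hlf t).toFinset, x) ∈ MulAction.fixedPoints G T ∧
      (∏ x ∈ (hlf t).toFinset, x) ∉ R) := by
  classical
  refine ⟨trivial, fun t ht => ?_⟩
  set s := (hlf t).toFinset with hs
  have hmem : ∀ z, z ∈ s ↔ z ∈ MulAction.orbit G t := fun z => (hlf t).mem_toFinset
  have himg : ∀ σ : G, s.image (σ • ·) = s := by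
    intro σ
    ext z
    simp only [Finset.mem_image, hmem]
    constructor
    · rintro ⟨w, hw, rfl⟩
      obtain ⟨g, rfl⟩ := hw
      exact ⟨σ * g, mul_smul σ g t⟩
    · intro hz
      obtain ⟨g, rfl⟩ := hz
      exact ⟨(σ⁻¹ * g) • t, ⟨σ⁻¹ * g, rfl⟩, by rw [← mul_smul, ← mul_assoc, mul_inv_cancel, one_mul]⟩
  constructor
  · intro σ
    calc σ • ∏ x ∈ s, x
        = MulSemiringAction.toRingHom G T σ (∏ x ∈ s, x) := rfl
      _ = ∏ x ∈ s, MulSemiringAction.toRingHom G T σ x := map_prod _ _ _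
      _ = ∏ x ∈ s, σ • x := rfl
      _ = ∏ x ∈ s.image (σ • ·), x := by
            rw [Finset.prod_image (fun a _ b _ h => smul_left_cancel σ h)]
      _ = ∏ x ∈ s, x := by rw [himg]
  · have hbase : ∀ x ∈ s, x ∉ R := by
      intro x hx
      obtain ⟨g, rfl⟩ := (hmem x).mp hx
      intro hgt
      exact ht (by simpa [← mul_smul] using hinv g⁻¹ _ hgt)
    have hne : s.Nonempty := ⟨t, (hmem t).mpr (MulAction.mem_orbit_self t)⟩
    exact Finset.prod_induction_nonempty _ (fun z => z ∉ R)
      (fun a b ha hb => key R hmin hic ha hb) hne hbase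

/-- if `R ⊂ T` is an integrally closed minimal ring extension and `G`
is locally finite, then `R^G ≠ T^G`; indeed, for `t ∈ T \ R` the orbit product
lies in `T^G \ R^G`. -/
theorem stmt9 (G T : Type*) [CommRing T] [Group G] [MulSemiringAction G T]
    (hlf : ∀ t : T, (MulAction.orbit G t).Finite)
    (R : Subring T) (hinv : ∀ σ : G, ∀ r ∈ R, σ • r ∈ R)
    (hmin : IsMinimalPair R ⊤)
    (hic : ∀ t : T, IntegralOver R t → t ∈ R) :
    R ⊓ fixedSubring G T ≠ fixedSubring G T ∧
    ∀ t : T, t ∉ R →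
      (∏ x ∈ (hlf t).toFinset, x) ∈ fixedSubring G T ∧
      (∏ x ∈ (hlf t).toFinset, x) ∉ R ⊓ fixedSubring G T := by
  have h := (orbitProdAux G T hlf R hinv hmin hic).2
  constructor
  · intro heq
    obtain ⟨t, -, ht⟩ := SetLike.exists_of_lt hmin.1
    obtain ⟨hfix, hnR⟩ := h t ht
    have hmemF : (∏ x ∈ (hlf t).toFinset, x) ∈ fixedSubring G T := hfix
    rw [← heq] at hmemF
    exact hnR (Subring.mem_inf.mp hmemF).1
  · intro t ht
    obtain ⟨hfix, hnR⟩ := h t ht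
    exact ⟨hfix, fun hm => hnR (Subring.mem_inf.mp hm).1⟩
end

section
/- Let R ⊂ T be an integrally closed minimal ring extension of commutative rings with identity, and let G be a locally finite group of automorphisms of T leaving R invariant. Then R^G ⊂ T^G is an integrally closed minimal ring extension. -/
open Polynomial

namespace St10

variable {T : Type*} [CommRing T]

/-- Polynomials all of whose coefficients lie in the subring `R`. -/
def polySub (R : Subring T) : Subring (Polynomial T) where
  carrier := {p : Polynomial T | ∀ i, p.coeff i ∈ R}
  zero_mem' := by intro i; rw [coeff_zero]; exact zero_mem R
  one_mem' := by
    intro i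
    rw [coeff_one]
    split
    · exact one_mem R
    · exact zero_mem R
  add_mem' := by
    intro a b ha hb i
    rw [coeff_add]; exact add_mem (ha i) (hb i)
  neg_mem' := by
    intro a ha i
    rw [coeff_neg]; exact neg_mem (ha i)
  mul_mem' := by
    intro a b ha hb i
    rw [coeff_mul]
    exact Subring.sum_mem _ fun c _ => mul_mem (ha c.1) (hb c.2)

lemma mem_polySub {R : Subring T} {p : Polynomial T} :
    p ∈ polySub R ↔ ∀ i, p.coeff i ∈ R := Iff.rfl

lemma C_mem_polySub {R : Subring T} {r : T} (hr : r ∈ R) : C r ∈ polySub R := by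
  intro i
  rw [coeff_C]
  split
  · exact hr
  · exact zero_mem R

lemma X_mem_polySub {R : Subring T} : (X : Polynomial T) ∈ polySub R := by
  intro i
  rw [coeff_X]
  split
  · exact one_mem R
  · exact zero_mem R

/-- The set of values of `R`-coefficient polynomials at `u`, as a subring. -/
def evalSub (R : Subring T) (u : T) : Subring T where
  carrier := {t : T | ∃ p ∈ polySub R, eval u p = t}
  zero_mem' := ⟨0, zero_mem _, by simp⟩
  one_mem' := ⟨1, one_mem _, by simp⟩
  add_mem' := by
    rintro a b ⟨p, hp, rfl⟩ ⟨q, hq, rfl⟩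
    exact ⟨p + q, add_mem hp hq, by simp⟩
  neg_mem' := by
    rintro a ⟨p, hp, rfl⟩
    exact ⟨-p, neg_mem hp, by simp⟩
  mul_mem' := by
    rintro a b ⟨p, hp, rfl⟩ ⟨q, hq, rfl⟩
    exact ⟨p * q, mul_mem hp hq, by simp⟩

variable {R : Subring T}

lemma adjoin_eq_top (hmin : IsMinimalPair R (⊤ : Subring T)) {u : T} (hu : u ∉ R) :
    Subring.closure (↑R ∪ {u}) = ⊤ := by
  have hRle : R ≤ Subring.closure (↑R ∪ {u}) := fun r hr => Subring.subset_closure (Or.inl hr)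
  rcases hmin.2 _ hRle le_top with h | h
  · exfalso
    apply hu
    rw [← h]
    exact Subring.subset_closure (Or.inr rfl)
  · exact h

lemma exists_rep (hmin : IsMinimalPair R (⊤ : Subring T)) {u : T} (hu : u ∉ R) (t : T) :
    ∃ p ∈ polySub R, eval u p = t := by
  have hle : Subring.closure (↑R ∪ {u}) ≤ evalSub R u := by
    rw [Subring.closure_le]
    rintro x (hx | hx)
    · exact ⟨C x, C_mem_polySub hx, by simp⟩
    · rcases hx with rfl
      exact ⟨X, X_mem_polySub, by simp⟩
  have : t ∈ evalSub R u := hle (by rw [adjoin_eq_top hmin hu]; trivial)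
  exact this

end St10

namespace St10X
open St10
variable {T : Type*} [CommRing T] {R : Subring T}

/-- Horner tails of `q` at `u`. -/
noncomputable def tl (q : Polynomial T) (u : T) (k : ℕ) : T :=
  ∑ i ∈ Finset.range (q.natDegree + 1), q.coeff (k + i) * u ^ i

lemma tl_eq_zero {q : Polynomial T} {u : T} {k : ℕ} (h : q.natDegree < k) : tl q u k = 0 :=
  Finset.sum_eq_zero fun i _ => by
    rw [coeff_eq_zero_of_natDegree_lt (by omega), zero_mul]

lemma tl_rec (q : Polynomial T) (u : T) (k : ℕ) :
    tl q u k = q.coeff k + tl q u (k + 1) * u := by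
  unfold tl
  rw [Finset.sum_range_succ' (fun i => q.coeff (k + i) * u ^ i) q.natDegree,
    Finset.sum_mul, Finset.sum_range_succ,
    coeff_eq_zero_of_natDegree_lt (show q.natDegree < k + 1 + q.natDegree by omega)]
  rw [zero_mul, zero_mul, add_zero, add_zero, pow_zero, mul_one]
  rw [add_comm]
  congr 1
  apply Finset.sum_congr rfl
  intro i _
  rw [pow_succ, show k + (i + 1) = k + 1 + i from by omega]
  ring

lemma tl_partial {q : Polynomial T} {u : T} (heval : q.eval u = 0) :
    ∀ k, (∑ i ∈ Finset.range k, q.coeff i * u ^ i) + tl q u k * u ^ k = 0 := by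
  intro k
  induction k with
  | zero =>
    rw [Finset.range_zero, Finset.sum_empty, zero_add, pow_zero, mul_one]
    rw [show tl q u 0 = q.eval u from ?_, heval]
    rw [eval_eq_sum_range]
    exact Finset.sum_congr rfl fun i _ => by rw [Nat.zero_add]
  | succ n ih =>
    rw [Finset.sum_range_succ]
    linear_combination ih - u ^ n * tl_rec q u n

lemma tl_mem (hic : ∀ t, IntegralOver R t → t ∈ R) {q : Polynomial T} {u : T}
    (hq : q ∈ polySub R) (heval : q.eval u = 0) :
    ∀ k, 1 ≤ k → tl q u k ∈ R ∧ tl q u k * u ∈ R := by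
  have key : ∀ k, 1 ≤ k → tl q u k ∈ R → tl q u k * u ∈ R := by
    intro k hk hmem
    set c := tl q u k with hc
    set W : Polynomial T := ∑ i ∈ Finset.range k, C (q.coeff i * c ^ (k - 1 - i)) * X ^ i with hW
    have hdeg : W.degree < (k : ℕ) := by
      apply lt_of_le_of_lt (degree_sum_le _ _)
      rw [Finset.sup_lt_iff (by exact_mod_cast WithBot.bot_lt_coe k)]
      intro i hi
      exact lt_of_le_of_lt (degree_C_mul_X_pow_le _ _)
        (by exact_mod_cast Finset.mem_range.mp hi)
    have hmonic : (X ^ k + W).Monic := monic_X_pow_add hdeg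
    have hcoeff : (X ^ k + W) ∈ polySub R := by
      refine add_mem (pow_mem X_mem_polySub k) (Subring.sum_mem _ fun i _ => ?_)
      exact mul_mem (C_mem_polySub (mul_mem (hq i) (pow_mem hmem _))) (pow_mem X_mem_polySub i)
    have hpart := tl_partial heval k
    have hterm : ∀ i ∈ Finset.range k,
        eval (c * u) (C (q.coeff i * c ^ (k - 1 - i)) * X ^ i)
          = c ^ (k - 1) * (q.coeff i * u ^ i) := by
      intro i hi
      have hik : i < k := Finset.mem_range.mp hi
      have h1 : c ^ (k - 1 - i) * c ^ i = c ^ (k - 1) := by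
        rw [← pow_add]
        congr 1
        omega
      rw [eval_mul, eval_C, eval_pow, eval_X, mul_pow]
      linear_combination q.coeff i * u ^ i * h1
    have heval2 : eval (c * u) (X ^ k + W) = 0 := by
      rw [eval_add, eval_pow, eval_X, hW, eval_finset_sum, Finset.sum_congr rfl hterm,
        ← Finset.mul_sum]
      have hS : ∑ i ∈ Finset.range k, q.coeff i * u ^ i = -(c * u ^ k) := by
        linear_combination hpart
      rw [hS, mul_pow]
      have hck : c ^ k = c ^ (k - 1) * c := by
        rw [← pow_succ]
        congr 1
        omega
      rw [hck]
      ring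
    exact hic _ ⟨X ^ k + W, hmonic, hcoeff, heval2⟩
  have main : ∀ n k, q.natDegree + 1 ≤ k + n → 1 ≤ k → tl q u k ∈ R ∧ tl q u k * u ∈ R := by
    intro n
    induction n with
    | zero =>
      intro k hk _
      rw [tl_eq_zero (by omega)]
      exact ⟨zero_mem R, by rw [zero_mul]; exact zero_mem R⟩
    | succ n ih =>
      intro k hk hk1
      by_cases hbig : q.natDegree < k
      · rw [tl_eq_zero hbig]
        exact ⟨zero_mem R, by rw [zero_mul]; exact zero_mem R⟩
      · have hnext := ih (k + 1) (by omega) (by omega)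
        have hmem : tl q u k ∈ R := by
          rw [tl_rec]
          exact add_mem (hq k) hnext.2
        exact ⟨hmem, key k hk1 hmem⟩
  intro k hk
  exact main (q.natDegree + 1) k (by omega) hk

end St10X

namespace St10Y
open St10 St10X
variable {T : Type*} [CommRing T] {R : Subring T}

/-- `R + I` as a subring, for an ideal `I` of `T`. -/
def addIdeal (R : Subring T) (I : Ideal T) : Subring T where
  carrier := {x : T | ∃ r ∈ R, ∃ m ∈ I, x = r + m}
  zero_mem' := ⟨0, zero_mem R, 0, I.zero_mem, by ring⟩
  one_mem' := ⟨1, one_mem R, 0, I.zero_mem, by ring⟩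
  add_mem' := by
    rintro a b ⟨r, hr, m, hm, rfl⟩ ⟨r', hr', m', hm', rfl⟩
    exact ⟨r + r', add_mem hr hr', m + m', I.add_mem hm hm', by ring⟩
  neg_mem' := by
    rintro a ⟨r, hr, m, hm, rfl⟩
    exact ⟨-r, neg_mem hr, -m, I.neg_mem hm, by ring⟩
  mul_mem' := by
    rintro a b ⟨r, hr, m, hm, rfl⟩ ⟨r', hr', m', hm', rfl⟩
    refine ⟨r * r', mul_mem hr hr', r * m' + m * r' + m * m',
      I.add_mem (I.add_mem (I.mul_mem_left r hm') (I.mul_mem_right r' hm))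
        (I.mul_mem_right m' hm), by ring⟩

theorem star (hmin : IsMinimalPair R (⊤ : Subring T))
    (hic : ∀ t, IntegralOver R t → t ∈ R) {u : T} (hu : u ∉ R) :
    Ideal.span {j : T | j ∈ R ∧ j * u ∈ R} = ⊤ := by
  set Js := {j : T | j ∈ R ∧ j * u ∈ R} with hJs
  set I := Ideal.span Js with hI
  have hRle : R ≤ addIdeal R I := fun r hr => ⟨r, hr, 0, I.zero_mem, by ring⟩
  rcases hmin.2 (addIdeal R I) hRle le_top with hcase | hcase
  · -- impossible case : J T ⊆ R
    exfalso
    have habs : ∀ j ∈ Js, ∀ t : T, j * t ∈ R := by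
      intro j hj t
      have h1 : j * t ∈ I := I.mul_mem_right t (Ideal.subset_span hj)
      have h2 : j * t ∈ addIdeal R I := ⟨0, zero_mem R, j * t, h1, by ring⟩
      rw [hcase] at h2
      exact h2
    have hu2 : u * u ∉ R := by
      intro h
      apply hu
      apply hic
      refine ⟨X ^ 2 + C (-(u * u)), ?_, ?_, ?_⟩
      · exact monic_X_pow_add (lt_of_le_of_lt degree_C_le (by norm_num))
      · exact add_mem (pow_mem X_mem_polySub 2) (C_mem_polySub (neg_mem h))
      · rw [eval_add, eval_pow, eval_X, eval_C]
        ring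
    obtain ⟨g, hg, hgeval⟩ := exists_rep hmin hu2 u
    set Q : Polynomial T := ∑ i ∈ Finset.range (g.natDegree + 1), C (g.coeff i) * X ^ (2 * i)
      with hQ
    have hQmem : Q ∈ polySub R :=
      Subring.sum_mem _ fun i _ => mul_mem (C_mem_polySub (hg i)) (pow_mem X_mem_polySub _)
    have hQeval : eval u Q = u := by
      rw [hQ, eval_finset_sum]
      have : ∀ i ∈ Finset.range (g.natDegree + 1),
          eval u (C (g.coeff i) * X ^ (2 * i)) = g.coeff i * (u * u) ^ i := by
        intro i _
        rw [eval_mul, eval_C, eval_pow, eval_X, pow_mul]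
        ring_nf
      rw [Finset.sum_congr rfl this, ← eval_eq_sum_range, hgeval]
    have hQ1 : Q.coeff 1 = 0 := by
      rw [hQ, finset_sum_coeff]
      apply Finset.sum_eq_zero
      intro i _
      rw [coeff_C_mul, coeff_X_pow]
      rw [if_neg (by omega)]
      ring
    set q : Polynomial T := Q - X with hq
    have hqmem : q ∈ polySub R := sub_mem hQmem X_mem_polySub
    have hqeval : eval u q = 0 := by rw [hq, eval_sub, eval_X, hQeval, sub_self]
    have ht1 := tl_mem hic hqmem hqeval 1 le_rfl
    have ht2 := tl_mem hic hqmem hqeval 2 (by omega)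
    have hrec := tl_rec q u 1
    norm_num at hrec
    have hq1 : q.coeff 1 = -1 := by
      rw [hq, coeff_sub, hQ1, coeff_X_one]
      ring
    rw [hq1] at hrec
    -- u = tl2 * (u*u) - tl1 * u ∈ R
    apply hu
    have hform : u = tl q u 2 * (u * u) - tl q u 1 * u := by
      linear_combination u * hrec
    rw [hform]
    exact sub_mem (habs _ ⟨ht2.1, ht2.2⟩ (u * u)) ht1.2
  · -- main case
    have humem : u ∈ addIdeal R I := by rw [hcase]; trivial
    obtain ⟨r, hr, m, hm, hurm⟩ := humem
    set u' := u - r with hu'def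
    have hu'R : u' ∉ R := by
      intro h
      exact hu (by rw [show u = u' + r by rw [hu'def]; ring]; exact add_mem h hr)
    have hJs' : ∀ j : T, j ∈ R → j * u' ∈ R → j ∈ Js := by
      intro j hj hju'
      refine ⟨hj, ?_⟩
      have : j * u = j * u' + j * r := by rw [hu'def]; ring
      rw [this]
      exact add_mem hju' (mul_mem hj hr)
    obtain ⟨n, f, gel, hsum⟩ := Submodule.mem_span_set'.mp hm
    have hrep := fun i : Fin n => exists_rep hmin hu'R (f i)
    choose p hp hpe using hrep
    set P : Polynomial T := ∑ i, C ((gel i : T)) * p i with hP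
    have hPmem : P ∈ polySub R := by
      refine Subring.sum_mem _ fun i _ => mul_mem (C_mem_polySub ?_) (hp i)
      exact (gel i).2.1
    have hPcoeff : ∀ k, P.coeff k ∈ I := by
      intro k
      rw [hP, finset_sum_coeff]
      refine Ideal.sum_mem _ fun i _ => ?_
      rw [coeff_C_mul]
      exact I.mul_mem_right _ (Ideal.subset_span (gel i).2)
    have hPeval : eval u' P = u' := by
      rw [hP, eval_finset_sum]
      have : ∀ i ∈ (Finset.univ : Finset (Fin n)),
          eval u' (C ((gel i : T)) * p i) = f i * (gel i : T) := by
        intro i _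
        rw [eval_mul, eval_C, hpe i]
        ring
      rw [Finset.sum_congr rfl this]
      have : ∑ i, f i * (gel i : T) = m := by
        rw [← hsum]
        refine Finset.sum_congr rfl fun i _ => ?_
        rw [smul_eq_mul]
      rw [this, hu'def, hurm]
      ring
    set q : Polynomial T := P - X with hq
    have hqmem : q ∈ polySub R := sub_mem hPmem X_mem_polySub
    have hqeval : eval u' q = 0 := by rw [hq, eval_sub, eval_X, hPeval, sub_self]
    have ht1 := tl_mem hic hqmem hqeval 1 le_rfl
    have ht2 := tl_mem hic hqmem hqeval 2 (by omega)
    have hrec := tl_rec q u' 1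
    norm_num at hrec
    have hq1 : q.coeff 1 = P.coeff 1 - 1 := by rw [hq, coeff_sub, coeff_X_one]
    rw [hq1] at hrec
    rw [Ideal.eq_top_iff_one]
    have hone : (1 : T) = P.coeff 1 - tl q u' 1 + tl q u' 2 * u' := by
      linear_combination hrec
    rw [hone]
    refine Ideal.add_mem _ (Ideal.sub_mem _ (hPcoeff 1) ?_) (I.mul_mem_right u' ?_)
    · exact Ideal.subset_span (hJs' _ ht1.1 ht1.2)
    · exact Ideal.subset_span (hJs' _ ht2.1 ht2.2)

end St10Y


namespace St10Z
open St10 St10X St10Y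
variable {G T : Type*} [CommRing T] [Group G] [MulSemiringAction G T] {R : Subring T}

lemma orbit_poly_finite (hlf : ∀ t : T, (MulAction.orbit G t).Finite) (p : Polynomial T) :
    (MulAction.orbit G p).Finite := by
  set D := p.natDegree with hD
  have himg : (fun q : Polynomial T => fun i : Fin (D + 1) => q.coeff i) '' (MulAction.orbit G p)
      ⊆ Set.univ.pi fun i : Fin (D + 1) => MulAction.orbit G (p.coeff i) := by
    rintro x ⟨q, hq, rfl⟩
    obtain ⟨σ, rfl⟩ := hq
    intro i _
    show (σ • p).coeff i ∈ MulAction.orbit G (p.coeff i)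
    rw [Polynomial.coeff_smul]
    exact ⟨σ, rfl⟩
  have hfin := (Set.Finite.pi fun i : Fin (D + 1) => hlf (p.coeff i)).subset himg
  apply Set.Finite.of_finite_image hfin
  rintro q1 hq1 q2 hq2 heq
  obtain ⟨σ1, rfl⟩ := hq1
  obtain ⟨σ2, rfl⟩ := hq2
  ext n
  by_cases hn : n < D + 1
  · have := congrFun heq (⟨n, hn⟩ : Fin (D + 1))
    exact this
  · rw [Polynomial.coeff_smul, Polynomial.coeff_smul,
      Polynomial.coeff_eq_zero_of_natDegree_lt (by omega), smul_zero, smul_zero]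

lemma smul_orbit_toFinset_poly {p q : Polynomial T} (hfin : (MulAction.orbit G p).Finite)
    (hq : q ∈ hfin.toFinset) (σ : G) : σ • q ∈ hfin.toFinset := by
  rw [Set.Finite.mem_toFinset] at *
  obtain ⟨τ, rfl⟩ := hq
  exact ⟨σ * τ, (mul_smul σ τ p)⟩

lemma smul_prod_orbit {p : Polynomial T} (hfin : (MulAction.orbit G p).Finite) (σ : G) :
    σ • (∏ Q ∈ hfin.toFinset, Q) = ∏ Q ∈ hfin.toFinset, Q := by
  have h1 : σ • (∏ Q ∈ hfin.toFinset, Q)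
      = ∏ Q ∈ hfin.toFinset, σ • Q := by
    rw [show ∀ x : Polynomial T, σ • x
        = (MulSemiringAction.toRingHom G (Polynomial T) σ) x from fun _ => rfl]
    exact map_prod _ _ _
  rw [h1]
  refine Finset.prod_bij' (fun Q _ => σ • Q) (fun Q _ => σ⁻¹ • Q) ?_ ?_ ?_ ?_ ?_
  · intro Q hQ; exact smul_orbit_toFinset_poly hfin hQ σ
  · intro Q hQ; exact smul_orbit_toFinset_poly hfin hQ σ⁻¹
  · intro Q hQ; exact inv_smul_smul σ Q
  · intro Q hQ; exact smul_inv_smul σ Q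
  · intro Q hQ; rfl

end St10Z

namespace St10Z2
open St10 St10X St10Y St10Z Pointwise
variable {G T : Type*} [CommRing T] [Group G] [MulSemiringAction G T] {R : Subring T}

lemma exists_fixed_notin (hlf : ∀ t : T, (MulAction.orbit G t).Finite)
    (hmin : IsMinimalPair R (⊤ : Subring T))
    (hic : ∀ t, IntegralOver R t → t ∈ R) :
    ∃ f, f ∈ fixedSubring G T ∧ f ∉ R := by
  obtain ⟨t0, -, ht0⟩ := SetLike.exists_of_lt hmin.1
  by_contra hcon
  push_neg at hcon
  set O := (hlf t0).toFinset with hO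
  set φ : Polynomial T := ∏ s ∈ O, (X - C s) with hφ
  have hsmul : ∀ σ : G, σ • φ = φ := by
    intro σ
    have h1 : σ • φ = ∏ s ∈ O, (X - C (σ • s)) := by
      rw [hφ, show ∀ x : Polynomial T, σ • x
          = (MulSemiringAction.toRingHom G (Polynomial T) σ) x from fun _ => rfl, map_prod]
      refine Finset.prod_congr rfl fun s _ => ?_
      show σ • (X - C s) = X - C (σ • s)
      rw [smul_sub, Polynomial.smul_X, Polynomial.smul_C]
    rw [h1, hφ]
    refine Finset.prod_bij' (fun s _ => σ • s) (fun s _ => σ⁻¹ • s) ?_ ?_ ?_ ?_ ?_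
    · intro s hs
      rw [Set.Finite.mem_toFinset] at *
      obtain ⟨τ, rfl⟩ := hs
      exact ⟨σ * τ, mul_smul σ τ t0⟩
    · intro s hs
      rw [Set.Finite.mem_toFinset] at *
      obtain ⟨τ, rfl⟩ := hs
      exact ⟨σ⁻¹ * τ, mul_smul σ⁻¹ τ t0⟩
    · intro s _; exact inv_smul_smul σ s
    · intro s _; exact smul_inv_smul σ s
    · intro s _; rfl
  have hcoeff : ∀ i, φ.coeff i ∈ R := by
    intro i
    refine hcon _ fun σ => ?_
    rw [← Polynomial.coeff_smul, hsmul σ]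
  apply ht0
  apply hic
  refine ⟨φ, monic_prod_of_monic _ _ fun s _ => monic_X_sub_C s, hcoeff, ?_⟩
  rw [eval_prod]
  refine Finset.prod_eq_zero ((hlf t0).mem_toFinset.mpr (MulAction.mem_orbit_self t0)) ?_
  rw [eval_sub, eval_X, eval_C, sub_self]

lemma step (hlf : ∀ t : T, (MulAction.orbit G t).Finite)
    (hinv : ∀ σ : G, ∀ r ∈ R, σ • r ∈ R)
    (hmin : IsMinimalPair R (⊤ : Subring T))
    (hic : ∀ t, IntegralOver R t → t ∈ R)
    {S : Subring T} (hAS : R ⊓ fixedSubring G T ≤ S) (hSF : S ≤ fixedSubring G T)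
    {u : T} (huS : u ∈ S) (huR : u ∉ R) {v : T} (hv : v ∈ fixedSubring G T) : v ∈ S := by
  classical
  have hufix : ∀ σ : G, σ • u = u := hSF huS
  have hvfix : ∀ σ : G, σ • v = v := hv
  set Jd : ℕ → Set T := fun d => {x : T | ∀ i, i ≤ d → x * u ^ i ∈ R} with hJd
  have hJdR : ∀ d x, x ∈ Jd d → x ∈ R := by
    intro d x hx
    have := hx 0 (Nat.zero_le d)
    rwa [pow_zero, mul_one] at this
  have hJdmulR : ∀ d x r, x ∈ Jd d → r ∈ R → x * r ∈ Jd d := by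
    intro d x r hx hr i hi
    rw [show x * r * u ^ i = x * u ^ i * r by ring]
    exact mul_mem (hx i hi) hr
  have hJdadd : ∀ d (x y : T), x ∈ Jd d → y ∈ Jd d → x + y ∈ Jd d := by
    intro d x y hx hy i hi
    rw [add_mul]
    exact add_mem (hx i hi) (hy i hi)
  have hJdzero : ∀ d, (0 : T) ∈ Jd d := by
    intro d i hi
    rw [zero_mul]
    exact zero_mem R
  have hsmulpow : ∀ (σ : G) (i : ℕ), σ • u ^ i = u ^ i := by
    intro σ i
    have h2 : σ • (u ^ i) = (σ • u) ^ i := map_pow (MulSemiringAction.toRingHom G T σ) u i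
    rw [h2, hufix σ]
  have hJdsmul : ∀ d (x : T) (σ : G), x ∈ Jd d → σ • x ∈ Jd d := by
    intro d x σ hx i hi
    have h1 : σ • x * u ^ i = σ • (x * u ^ i) := by
      rw [smul_mul', hsmulpow σ i]
    rw [h1]
    exact hinv σ _ (hx i hi)
  have hspan : ∀ d : ℕ, Ideal.span (Jd d) = ⊤ := by
    intro d
    induction d with
    | zero =>
      rw [Ideal.eq_top_iff_one]
      refine Ideal.subset_span ?_
      intro i hi
      have : i = 0 := by omega
      rw [this, pow_zero, mul_one]
      exact one_mem R
    | succ d ih =>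
      have hmul : Ideal.span {j : T | j ∈ R ∧ j * u ∈ R} * Ideal.span (Jd d)
          = Ideal.span ({j : T | j ∈ R ∧ j * u ∈ R} * Jd d) := Ideal.span_mul_span' _ _
      have hsub : {j : T | j ∈ R ∧ j * u ∈ R} * Jd d ⊆ Jd (d + 1) := by
        rintro z hz
        obtain ⟨x, hx, y, hy, rfl⟩ := hz
        intro i hi
        cases i with
        | zero =>
          rw [pow_zero, mul_one]
          exact mul_mem hx.1 (hJdR d y hy)
        | succ i' =>
          rw [show x * y * u ^ (i' + 1) = x * u * (y * u ^ i') by ring]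
          exact mul_mem hx.2 (hy i' (by omega))
      have hstar := star hmin hic huR
      refine le_antisymm le_top ?_
      calc (⊤ : Ideal T) = Ideal.span {j : T | j ∈ R ∧ j * u ∈ R} * Ideal.span (Jd d) := by
            rw [hstar, ih, Ideal.top_mul]
        _ = Ideal.span ({j : T | j ∈ R ∧ j * u ∈ R} * Jd d) := hmul
        _ ≤ Ideal.span (Jd (d + 1)) := Ideal.span_mono hsub
  -- representation of v
  obtain ⟨pv, hpv, hpve⟩ := exists_rep hmin huR v
  set d := pv.natDegree with hd
  have h1 : (1 : T) ∈ Ideal.span (Jd d) := by rw [hspan d]; trivial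
  obtain ⟨n, f, gel, hsum⟩ := Submodule.mem_span_set'.mp h1
  have hrep := fun i : Fin n => exists_rep hmin huR (f i)
  choose p hp hpe using hrep
  set P1 : Polynomial T := ∑ i, C ((gel i : T)) * p i with hP1
  have hP1coeff : ∀ k, P1.coeff k ∈ Jd d := by
    intro k
    rw [hP1, finset_sum_coeff]
    refine Finset.sum_induction _ (· ∈ Jd d) (hJdadd d) (hJdzero d) fun i _ => ?_
    rw [coeff_C_mul]
    exact hJdmulR d _ _ (gel i).2 (hp i k)
  have hP1eval : eval u P1 = 1 := by
    rw [hP1, eval_finset_sum]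
    have h2 : ∀ i ∈ (Finset.univ : Finset (Fin n)),
        eval u (C ((gel i : T)) * p i) = f i • ((gel i : T)) := by
      intro i _
      rw [eval_mul, eval_C, hpe i, smul_eq_mul]
      ring
    rw [Finset.sum_congr rfl h2, hsum]
  have hofin := orbit_poly_finite hlf P1
  set Φ := hofin.toFinset with hΦ
  have hmemΦ : P1 ∈ Φ := (Set.Finite.mem_toFinset _).mpr (MulAction.mem_orbit_self P1)
  set Pi := ∏ Q ∈ Φ, Q with hPi
  have hPiinv : ∀ σ : G, σ • Pi = Pi := fun σ => smul_prod_orbit hofin σ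
  have hPicoeff_fix : ∀ K (σ : G), σ • Pi.coeff K = Pi.coeff K := by
    intro K σ
    rw [← Polynomial.coeff_smul, hPiinv σ]
  have horbcoeff : ∀ Q ∈ Φ, ∀ k, Q.coeff k ∈ Jd d := by
    intro Q hQ k
    rw [Set.Finite.mem_toFinset] at hQ
    obtain ⟨σ, rfl⟩ := hQ
    rw [Polynomial.coeff_smul]
    exact hJdsmul d _ σ (hP1coeff k)
  have hWmem : (∏ Q ∈ Φ.erase P1, Q) ∈ polySub R := by
    refine Subring.prod_mem _ fun Q hQ => ?_
    intro k
    exact hJdR d _ (horbcoeff Q (Finset.mem_of_mem_erase hQ) k)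
  have hPieq : Pi = P1 * ∏ Q ∈ Φ.erase P1, Q := by
    exact (Finset.mul_prod_erase Φ (fun Q => Q) hmemΦ).symm
  have hPicoeffJd : ∀ K, Pi.coeff K ∈ Jd d := by
    intro K
    rw [hPieq, coeff_mul]
    refine Finset.sum_induction _ (· ∈ Jd d) (hJdadd d) (hJdzero d) fun c _ => ?_
    exact hJdmulR d _ _ (hP1coeff c.1) (hWmem c.2)
  have hPieval : eval u Pi = 1 := by
    rw [hPi, eval_prod]
    refine Finset.prod_eq_one fun Q hQ => ?_
    rw [Set.Finite.mem_toFinset] at hQ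
    obtain ⟨σ, rfl⟩ := hQ
    calc eval u (σ • P1) = eval (σ • u) (σ • P1) := by rw [hufix σ]
      _ = σ • eval u P1 := Polynomial.smul_eval_smul (S := T) σ P1 u
      _ = 1 := by rw [hP1eval, smul_one]
  have hvrep : v = ∑ K ∈ Finset.range (Pi.natDegree + 1), Pi.coeff K * v * u ^ K := by
    conv_lhs => rw [← one_mul v, ← hPieval]
    rw [eval_eq_sum_range, Finset.sum_mul]
    exact Finset.sum_congr rfl fun K _ => by ring
  have hcv : ∀ K, Pi.coeff K * v ∈ S := by
    intro K
    apply hAS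
    rw [Subring.mem_inf]
    constructor
    · have h3 : Pi.coeff K * v = ∑ i ∈ Finset.range (d + 1), pv.coeff i * (Pi.coeff K * u ^ i) := by
        rw [← hpve, eval_eq_sum_range, Finset.mul_sum, ← hd]
        exact Finset.sum_congr rfl fun i _ => by ring
      rw [h3]
      refine Subring.sum_mem _ fun i hi => mul_mem (hpv i) ?_
      exact hPicoeffJd K i (by have := Finset.mem_range.mp hi; omega)
    · exact fun σ => by rw [smul_mul', hPicoeff_fix K σ, hvfix σ]
  rw [hvrep]
  exact Subring.sum_mem _ fun K _ => mul_mem (hcv K) (pow_mem huS K)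

end St10Z2


/-- if `R ⊂ T` is an integrally closed minimal ring extension and
`G` is locally finite, then `R^G ⊂ T^G` is an integrally closed minimal ring
extension. -/
theorem stmt10 (G T : Type*) [CommRing T] [Group G] [MulSemiringAction G T]
    (hlf : ∀ t : T, (MulAction.orbit G t).Finite)
    (R : Subring T) (hinv : ∀ σ : G, ∀ r ∈ R, σ • r ∈ R)
    (hmin : IsMinimalPair R ⊤)
    (hic : ∀ t : T, IntegralOver R t → t ∈ R) :
    IsMinimalPair (R ⊓ fixedSubring G T) (fixedSubring G T) ∧
    ∀ t : T, t ∈ fixedSubring G T → IntegralOver (R ⊓ fixedSubring G T) t →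
      t ∈ R ⊓ fixedSubring G T := by
  constructor
  · constructor
    · -- strictness
      obtain ⟨f, hf, hfR⟩ := St10Z2.exists_fixed_notin hlf hmin hic
      refine lt_of_le_of_ne inf_le_right ?_
      intro heq
      apply hfR
      have : f ∈ R ⊓ fixedSubring G T := by rw [heq]; exact hf
      exact (Subring.mem_inf.mp this).1
    · intro S hAS hSF
      by_cases hSR : S ≤ R
      · left
        refine le_antisymm (fun x hx => ?_) hAS
        exact Subring.mem_inf.mpr ⟨hSR hx, hSF hx⟩
      · right
        obtain ⟨u, huS, huR⟩ := SetLike.not_le_iff_exists.mp hSR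
        refine le_antisymm hSF fun v hv => ?_
        exact St10Z2.step hlf hinv hmin hic hAS hSF huS huR hv
  · rintro t htF ⟨p, hmono, hcoeff, heval⟩
    refine Subring.mem_inf.mpr ⟨?_, htF⟩
    exact hic t ⟨p, hmono, fun i => (Subring.mem_inf.mp (hcoeff i)).1, heval⟩
end

section
/- Let R ⊆ T be commutative rings, G a strongly locally finite group of automorphisms of T leaving R invariant. Define 𝓕 = {ideals I of R : IT = T} and 𝓕' = {ideals J of R^G : J T^G = T^G}. If I ∈ 𝓕, then I ∩ R^G ∈ 𝓕'. -/
section aux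

variable {G T : Type*} [CommRing T] [Group G] [MulSemiringAction G T]

/-- Reindexing a product over the (finite) orbit of `t` by the action of `σ`. -/
lemma orbit_prod_reindex (hlf : ∀ t : T, (MulAction.orbit G t).Finite) (t : T) (σ : G)
    {M : Type*} [CommMonoid M] (f : T → M) :
    ∏ x ∈ (hlf t).toFinset, f (σ • x) = ∏ x ∈ (hlf t).toFinset, f x := by
  refine Finset.prod_bij' (fun a _ => σ • a) (fun a _ => σ⁻¹ • a) ?_ ?_ ?_ ?_ ?_
  · intro a ha
    simp only [Set.Finite.mem_toFinset] at ha ⊢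
    obtain ⟨g, rfl⟩ := ha
    exact ⟨σ * g, by simp [mul_smul]⟩
  · intro a ha
    simp only [Set.Finite.mem_toFinset] at ha ⊢
    obtain ⟨g, rfl⟩ := ha
    exact ⟨σ⁻¹ * g, by simp [mul_smul]⟩
  · intro a _; simp
  · intro a _; simp
  · intro a _; rfl

/-- Under a locally finite action, `T` is integral over the fixed subring. -/
lemma fixedSubring_isIntegral (hlf : ∀ t : T, (MulAction.orbit G t).Finite) [Nontrivial T] :
    Algebra.IsIntegral (fixedSubring G T) T := by
  constructor
  intro t
  set s := (hlf t).toFinset with hs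
  set p : Polynomial T := ∏ x ∈ s, (Polynomial.X - Polynomial.C x) with hp
  have hmonic : p.Monic := Polynomial.monic_prod_of_monic _ _ fun x _ =>
    Polynomial.monic_X_sub_C x
  have hmap : ∀ σ : G, p.map (MulSemiringAction.toRingHom G T σ) = p := by
    intro σ
    rw [hp, Polynomial.map_prod]
    simp only [Polynomial.map_sub, Polynomial.map_X, Polynomial.map_C]
    exact orbit_prod_reindex hlf t σ fun x => Polynomial.X - Polynomial.C x
  have hcoeff : ∀ n : ℕ, p.coeff n ∈ fixedSubring G T := by
    intro n σ
    have := congrArg (fun q => Polynomial.coeff q n) (hmap σ)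
    simpa [Polynomial.coeff_map] using this
  have hlifts : p ∈ Polynomial.lifts (fixedSubring G T).subtype := by
    rw [Polynomial.lifts_iff_coeff_lifts]
    intro n
    exact ⟨⟨p.coeff n, hcoeff n⟩, rfl⟩
  obtain ⟨q, hq, _, hqmonic⟩ := Polynomial.lifts_and_degree_eq_and_monic hlifts hmonic
  refine ⟨q, hqmonic, ?_⟩
  have halg : (algebraMap (fixedSubring G T) T) = (fixedSubring G T).subtype := rfl
  rw [Polynomial.eval₂_eq_eval_map, halg, hq]
  have ht : t ∈ s := by simpa [hs] using MulAction.mem_orbit_self t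
  rw [hp, Polynomial.eval_prod]
  exact Finset.prod_eq_zero ht (by simp)

end aux

/-- filter lemma: for a strongly locally finite action, if `I` is
an ideal of `R` with `IT = T`, then `(I ∩ R^G)T^G = T^G`. -/
theorem stmt13 (G T : Type*) [CommRing T] [Group G] [MulSemiringAction G T]
    (hlf : ∀ t : T, (MulAction.orbit G t).Finite)
    (hplf : ∀ P : Ideal T, P.IsPrime →
      ({Q : Ideal T | ∃ σ : G, Q = P.map (MulSemiringAction.toRingHom G T σ)}).Finite)
    (R : Subring T) (hinv : ∀ σ : G, ∀ r ∈ R, σ • r ∈ R)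
    (I : Ideal R) (hI : Ideal.map R.subtype I = ⊤) :
    Ideal.map (Subring.inclusion (inf_le_right : R ⊓ fixedSubring G T ≤ fixedSubring G T))
        (Ideal.comap (Subring.inclusion (inf_le_left : R ⊓ fixedSubring G T ≤ R)) I)
      = ⊤ := by
  classical
  rcases subsingleton_or_nontrivial T with hT | hT
  · rw [Ideal.eq_top_iff_one]
    have hall : ∀ x : ↥(fixedSubring G T),
        x ∈ Ideal.map (Subring.inclusion (inf_le_right : R ⊓ fixedSubring G T ≤ fixedSubring G T))
          (Ideal.comap (Subring.inclusion (inf_le_left : R ⊓ fixedSubring G T ≤ R)) I) := by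
      intro x
      rw [Subsingleton.elim x 0]
      exact Submodule.zero_mem _
    exact hall 1
  by_contra hK
  obtain ⟨M, hMmax, hKM⟩ := Ideal.exists_le_maximal _ hK
  haveI : Algebra.IsIntegral (fixedSubring G T) T := fixedSubring_isIntegral hlf
  haveI := hMmax.isPrime
  obtain ⟨P, -, hPprime, hPM⟩ :=
    Ideal.exists_ideal_over_prime_of_isIntegral M (⊥ : Ideal T) (by
      intro x hx
      have h0 : algebraMap (fixedSubring G T) T x = 0 :=
        Ideal.mem_bot.mp (Ideal.mem_comap.mp hx)
      have hx0 : x = 0 := Subtype.ext h0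
      rw [hx0]; exact M.zero_mem)
  haveI := hPprime
  -- key claim: every element of I lies in some σ(P)
  have key : ∀ a : R, a ∈ I →
      ∃ σ : G, (↑a : T) ∈ P.map (MulSemiringAction.toRingHom G T σ) := by
    intro a ha
    set s := (hlf (↑a : T)).toFinset with hsdef
    have hmemR : ∀ x ∈ s, x ∈ R := by
      intro x hx
      simp only [hsdef, Set.Finite.mem_toFinset] at hx
      obtain ⟨g, rfl⟩ := hx
      exact hinv g _ a.2
    set N : T := ∏ x ∈ s, x with hN
    have hNR : N ∈ R := Subring.prod_mem R hmemR
    have hNF : N ∈ fixedSubring G T := by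
      intro σ
      have h1 : σ • N = ∏ x ∈ s, σ • x := by
        rw [hN]
        exact map_prod (MulSemiringAction.toRingHom G T σ) _ _
      rw [h1, orbit_prod_reindex hlf _ σ (fun x => x)]
    have has : (↑a : T) ∈ s := by simpa [hsdef] using MulAction.mem_orbit_self (↑a : T)
    -- N, as an element of R, lies in I
    have hcR : ∏ x ∈ s.erase ↑a, x ∈ R := Subring.prod_mem R fun x hx =>
      hmemR x (Finset.mem_of_mem_erase hx)
    have hNI : (⟨N, hNR⟩ : R) ∈ I := by
      have hfact : (⟨N, hNR⟩ : R) = (⟨∏ x ∈ s.erase ↑a, x, hcR⟩ : R) * a := by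
        apply Subtype.ext
        show N = (∏ x ∈ s.erase ↑a, x) * ↑a
        rw [hN, ← Finset.mul_prod_erase s _ has, mul_comm]
      rw [hfact]
      exact I.mul_mem_left _ ha
    -- push N into M, hence into P
    have hNmem : N ∈ R ⊓ fixedSubring G T := Subring.mem_inf.mpr ⟨hNR, hNF⟩
    have hNM : (⟨N, hNF⟩ : fixedSubring G T) ∈ M := by
      apply hKM
      exact Ideal.mem_map_of_mem _ (show (⟨N, hNmem⟩ : ↥(R ⊓ fixedSubring G T)) ∈
        Ideal.comap (Subring.inclusion (inf_le_left : R ⊓ fixedSubring G T ≤ R)) I from hNI)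
    have hNP : N ∈ P := by
      have hc : (⟨N, hNF⟩ : fixedSubring G T) ∈
          Ideal.comap (algebraMap (fixedSubring G T) T) P := by
        rw [hPM]; exact hNM
      exact Ideal.mem_comap.mp hc
    rw [hN] at hNP
    obtain ⟨x, hxs, hxP⟩ := Ideal.IsPrime.prod_mem_iff.mp hNP
    simp only [hsdef, Set.Finite.mem_toFinset] at hxs
    obtain ⟨g, rfl⟩ := hxs
    refine ⟨g⁻¹, ?_⟩
    have hgx : MulSemiringAction.toRingHom G T g⁻¹ (g • (↑a : T)) = ↑a := by
      show g⁻¹ • g • (↑a : T) = ↑a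
      simp
    rw [← hgx]
    exact Ideal.mem_map_of_mem _ hxP
  -- prime avoidance over the finite orbit of P
  set S := (hplf P hPprime).toFinset with hSdef
  have hQprime : ∀ Q ∈ S, Q.IsPrime := by
    intro Q hQ
    simp only [hSdef, Set.Finite.mem_toFinset, Set.mem_setOf_eq] at hQ
    obtain ⟨σ, rfl⟩ := hQ
    have heq : P.map (MulSemiringAction.toRingHom G T σ) =
        P.map (MulSemiringAction.toRingEquiv G T σ) := rfl
    rw [heq]
    exact Ideal.map_isPrime_of_equiv _
  have hprime : ∀ Q ∈ S, (Q.comap R.subtype).IsPrime := by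
    intro Q hQ
    haveI := hQprime Q hQ
    exact Ideal.IsPrime.comap _
  have hsubset : (I : Set R) ⊆
      ⋃ Q ∈ (↑S : Set (Ideal T)), ((Q.comap R.subtype : Ideal R) : Set R) := by
    intro a ha
    obtain ⟨σ, hσ⟩ := key a ha
    refine Set.mem_biUnion ?_ (Ideal.mem_comap.mpr hσ)
    simp only [hSdef, Set.Finite.coe_toFinset, Set.mem_setOf_eq]
    exact ⟨σ, rfl⟩
  obtain ⟨Q, hQS, hIQ⟩ := (Ideal.subset_union_prime P P
    (fun Q hQ _ _ => hprime Q hQ)).mp hsubset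
  have htop : Ideal.map R.subtype I ≤ Q := Ideal.map_le_iff_le_comap.mpr hIQ
  rw [hI] at htop
  exact (hQprime Q hQS).ne_top (top_le_iff.mp htop)
end

section
/- Let R ⊆ T be commutative rings, G a strongly locally finite group of automorphisms of T leaving R invariant. If the inclusion R → T is a flat epimorphism of commutative rings, then the inclusion R^G → T^G is a flat epimorphism. Equivalently, if (R :_R t)T = T for all t ∈ T, then (R^G :_{R^G} x)T^G = T^G for all x ∈ T^G. -/
open Polynomial Pointwise

section Aux

variable {G T : Type*} [CommRing T] [Group G] [MulSemiringAction G T]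

lemma orbit_image_smul [DecidableEq T] (hlf : ∀ t : T, (MulAction.orbit G t).Finite) (σ : G) (t : T) :
    (hlf t).toFinset.image (fun s => σ • s) = (hlf t).toFinset := by
  classical
  have key : ∀ (τ : G) (u : T), u ∈ MulAction.orbit G t → τ • u ∈ MulAction.orbit G t :=
    fun τ u hu => MulAction.smul_orbit τ t ▸ Set.smul_mem_smul_set hu
  ext s
  simp only [Finset.mem_image, Set.Finite.mem_toFinset]
  constructor
  · rintro ⟨u, hu, rfl⟩
    exact key σ u hu
  · intro hs
    exact ⟨σ⁻¹ • s, key σ⁻¹ s hs, smul_inv_smul σ s⟩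

lemma prod_orbit_smul {β : Type*} [CommMonoid β]
    (hlf : ∀ t : T, (MulAction.orbit G t).Finite) (σ : G) (t : T) (f : T → β) :
    ∏ s ∈ (hlf t).toFinset, f (σ • s) = ∏ s ∈ (hlf t).toFinset, f s := by
  classical
  conv_rhs => rw [← orbit_image_smul hlf σ t]
  rw [Finset.prod_image]
  intro a _ b _ h
  exact smul_left_cancel σ h

lemma fixed_isIntegral (hlf : ∀ t : T, (MulAction.orbit G t).Finite) :
    Algebra.IsIntegral (fixedSubring G T) T := by
  constructor
  intro t
  set F := (hlf t).toFinset with hF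
  set p : T[X] := ∏ s ∈ F, (X - C s) with hp
  have hmapp : ∀ σ : G, p.map (MulSemiringAction.toRingHom G T σ) = p := by
    intro σ
    rw [hp, Polynomial.map_prod]
    have : ∀ s ∈ F, (X - C s).map (MulSemiringAction.toRingHom G T σ) = X - C (σ • s) := by
      intro s _
      rw [Polynomial.map_sub, Polynomial.map_X, Polynomial.map_C]
      rfl
    rw [Finset.prod_congr rfl this]
    exact prod_orbit_smul hlf σ t (fun s => X - C s)
  have hcoeff : ∀ n, p.coeff n ∈ fixedSubring G T := by
    intro n σ
    have := congrArg (fun q => Polynomial.coeff q n) (hmapp σ)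
    simpa [Polynomial.coeff_map] using this
  have hcoeffs : (↑p.coeffs : Set T) ⊆ (fixedSubring G T : Set T) := by
    intro c hc
    rw [Finset.mem_coe, Polynomial.mem_coeffs_iff] at hc
    obtain ⟨n, _, rfl⟩ := hc
    exact hcoeff n
  refine ⟨p.toSubring (fixedSubring G T) hcoeffs, ?_, ?_⟩
  · rw [Polynomial.monic_toSubring]
    exact monic_prod_of_monic _ _ (fun s _ => monic_X_sub_C s)
  · have : algebraMap (fixedSubring G T) T = (fixedSubring G T).subtype := rfl
    rw [Polynomial.eval₂_eq_eval_map, this, Polynomial.map_toSubring]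
    rw [hp, Polynomial.eval_prod]
    apply Finset.prod_eq_zero (i := t)
    · rw [hF, Set.Finite.mem_toFinset]
      exact MulAction.mem_orbit_self t
    · simp

end Aux

/-- for a strongly locally finite action, if `R ⊆ T` is a flat
epimorphic extension (equivalently a perfect localization: `(R :_R t)T = T` for
all `t ∈ T`), then so is `R^G ⊆ T^G`. -/
theorem stmt14 (G T : Type*) [CommRing T] [Group G] [MulSemiringAction G T]
    (hlf : ∀ t : T, (MulAction.orbit G t).Finite)
    (hplf : ∀ P : Ideal T, P.IsPrime →
      ({Q : Ideal T | ∃ σ : G, Q = P.map (MulSemiringAction.toRingHom G T σ)}).Finite)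
    (R : Subring T) (hinv : ∀ σ : G, ∀ r ∈ R, σ • r ∈ R)
    (hfe : ∀ t : T, Ideal.span {x : T | x ∈ R ∧ x * t ∈ R} = ⊤) :
    ∀ x : T, x ∈ fixedSubring G T →
      Ideal.span {y : fixedSubring G T |
          (y : T) ∈ R ⊓ fixedSubring G T ∧ (y : T) * x ∈ R ⊓ fixedSubring G T}
        = (⊤ : Ideal (fixedSubring G T)) := by
  classical
  intro x hx
  by_contra hne
  set K := fixedSubring G T with hK
  haveI : Algebra.IsIntegral K T := fixed_isIntegral hlf
  obtain ⟨m, hmmax, hspanm⟩ := Ideal.exists_le_maximal _ hne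
  have hker : RingHom.ker (algebraMap K T) ≤ m := by
    intro y hy
    have : (y : T) = 0 := hy
    have : y = 0 := Subtype.ext this
    rw [this]; exact m.zero_mem
  obtain ⟨Q, hQmax, hQcomap⟩ := Ideal.exists_ideal_over_maximal_of_isIntegral m hker
  haveI hQp : Q.IsPrime := hQmax.isPrime
  -- the finite orbit of Q
  have horbQ := hplf Q hQp
  set F : Finset (Ideal T) := horbQ.toFinset with hFdef
  have hQmemF : Q ∈ F := by
    rw [hFdef, Set.Finite.mem_toFinset]
    exact ⟨1, by
      have : MulSemiringAction.toRingHom G T (1 : G) = RingHom.id T := by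
        ext t; exact one_smul G t
      rw [this, Ideal.map_id]⟩
  have hFprime : ∀ Q' ∈ F, Q'.IsPrime := by
    intro Q' hQ'
    rw [hFdef, Set.Finite.mem_toFinset] at hQ'
    obtain ⟨σ, rfl⟩ := hQ'
    have : Q.map (MulSemiringAction.toRingHom G T σ) = σ • Q := rfl
    rw [this, Ideal.pointwise_smul_eq_comap]
    exact Ideal.IsPrime.comap _
  -- the conductor ideal inside R
  set J : Ideal R := {
    carrier := {a : R | (a : T) * x ∈ R}
    add_mem' := by
      intro a b ha hb
      have : ((a + b : R) : T) * x = (a : T) * x + (b : T) * x := by push_cast; ring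
      rw [Set.mem_setOf_eq, this]
      exact add_mem ha hb
    zero_mem' := by
      simp only [Set.mem_setOf_eq, ZeroMemClass.coe_zero, zero_mul]
      exact zero_mem R
    smul_mem' := by
      intro r a ha
      have : ((r • a : R) : T) * x = (r : T) * ((a : T) * x) := by
        rw [smul_eq_mul]; push_cast; ring
      rw [Set.mem_setOf_eq, this]
      exact mul_mem r.2 ha } with hJdef
  -- prime avoidance: find a ∈ J avoiding all primes in the orbit of Q
  have havoid : ¬ ((J : Set R) ⊆ ⋃ Q' ∈ (↑F : Set (Ideal T)), ↑(Q'.comap R.subtype)) := by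
    intro hsub
    obtain ⟨Q', hQ'F, hJle⟩ :=
      (Ideal.subset_union_prime (f := fun Q' : Ideal T => Q'.comap R.subtype) Q Q
        (fun Q' hQ' _ _ => haveI := hFprime Q' hQ'; Ideal.IsPrime.comap _)).mp hsub
    have hQ'p : Q'.IsPrime := hFprime Q' hQ'F
    have : Ideal.span {t : T | t ∈ R ∧ t * x ∈ R} ≤ Q' := by
      rw [Ideal.span_le]
      rintro t ⟨htR, htx⟩
      have hmem : (⟨t, htR⟩ : R) ∈ J := htx
      exact hJle hmem
    rw [hfe x] at this
    exact hQ'p.ne_top (top_le_iff.mp this)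
  obtain ⟨a, haJ, hanot⟩ := Set.not_subset.mp havoid
  have hanotin : ∀ Q' ∈ F, (a : T) ∉ Q' := by
    intro Q' hQ' hmem
    exact hanot (Set.mem_biUnion (Finset.mem_coe.mpr hQ') hmem)
  have haRx : (a : T) * x ∈ R := haJ
  -- the "norm" of a
  set FA : Finset T := (hlf (a : T)).toFinset with hFA
  have haFA : (a : T) ∈ FA := by
    rw [hFA, Set.Finite.mem_toFinset]; exact MulAction.mem_orbit_self _
  have hFAorbit : ∀ s ∈ FA, ∃ σ : G, s = σ • (a : T) := by
    intro s hs
    rw [hFA, Set.Finite.mem_toFinset] at hs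
    obtain ⟨σ, rfl⟩ := hs
    exact ⟨σ, rfl⟩
  set N : T := ∏ s ∈ FA, s with hN
  have hNR : N ∈ R := by
    apply prod_mem
    intro s hs
    obtain ⟨σ, rfl⟩ := hFAorbit s hs
    exact hinv σ _ a.2
  have hNK : N ∈ K := by
    intro σ
    have h1 : σ • N = ∏ s ∈ FA, σ • s := map_prod (MulSemiringAction.toRingHom G T σ) _ _
    rw [h1, hN, hFA]
    exact prod_orbit_smul hlf σ (a : T) id
  have hNxR : N * x ∈ R := by
    have h1 : N = (a : T) * ∏ s ∈ FA.erase (a : T), s := (Finset.mul_prod_erase FA id haFA).symm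
    have h2 : N * x = (∏ s ∈ FA.erase (a : T), s) * ((a : T) * x) := by rw [h1]; ring
    rw [h2]
    refine mul_mem (prod_mem ?_) haRx
    intro s hs
    obtain ⟨σ, rfl⟩ := hFAorbit s (Finset.mem_of_mem_erase hs)
    exact hinv σ _ a.2
  have hNnotQ : N ∉ Q := by
    intro hNQ
    rw [hN] at hNQ
    obtain ⟨s, hsFA, hsQ⟩ := (Ideal.IsPrime.prod_mem_iff (x := fun s : T => s)).mp hNQ
    obtain ⟨σ, rfl⟩ := hFAorbit s hsFA
    have h1 : (a : T) ∈ σ⁻¹ • Q := by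
      have := Ideal.smul_mem_pointwise_smul σ⁻¹ _ Q hsQ
      rwa [inv_smul_smul] at this
    have h2 : σ⁻¹ • Q ∈ F := by
      rw [hFdef, Set.Finite.mem_toFinset]
      exact ⟨σ⁻¹, rfl⟩
    exact hanotin _ h2 h1
  -- final contradiction
  have hNKx : N * x ∈ K := mul_mem hNK hx
  have hmemspan : (⟨N, hNK⟩ : K) ∈ Ideal.span {y : K |
      (y : T) ∈ R ⊓ K ∧ (y : T) * x ∈ R ⊓ K} :=
    Ideal.subset_span ⟨⟨hNR, hNK⟩, ⟨hNxR, hNKx⟩⟩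
  have hNm : (⟨N, hNK⟩ : K) ∈ m := hspanm hmemspan
  rw [← hQcomap] at hNm
  exact hNnotQ hNm
end

section
/- Let R ⊆ T be commutative rings, G a locally finite group of automorphisms of T leaving R invariant. If (R, T) is a normal pair (every intermediate ring is integrally closed in T), then (R^G, T^G) is a normal pair. -/
/-- `(A, B)` is a normal pair: every intermediate ring `S` is integrally closed
in `B`. -/
def IsNormalPairWithin {T : Type*} [CommRing T] (A B : Subring T) : Prop :=
  ∀ S : Subring T, A ≤ S → S ≤ B →
    ∀ t : T, t ∈ B → IntegralOver S t → t ∈ S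

section Helpers

open Polynomial

variable {T : Type*} [CommRing T]

/-- The subring of values of polynomials with coefficients in `R`, evaluated at `x`. -/
def polySubring (R : Subring T) (x : T) : Subring T where
  carrier := {y | ∃ p : Polynomial T, (∀ i, p.coeff i ∈ R) ∧ Polynomial.eval x p = y}
  zero_mem' := ⟨0, fun i => by simpa using R.zero_mem, by simp⟩
  one_mem' := ⟨1, fun i => by
      rw [Polynomial.coeff_one]
      split
      · exact R.one_mem
      · exact R.zero_mem
    , by simp⟩
  add_mem' := by
    rintro a b ⟨p, hp, rfl⟩ ⟨q, hq, rfl⟩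
    exact ⟨p + q, fun i => by simpa using add_mem (hp i) (hq i), by simp⟩
  neg_mem' := by
    rintro a ⟨p, hp, rfl⟩
    exact ⟨-p, fun i => by simpa using neg_mem (hp i), by simp⟩
  mul_mem' := by
    rintro a b ⟨p, hp, rfl⟩ ⟨q, hq, rfl⟩
    refine ⟨p * q, fun i => ?_, by simp⟩
    rw [Polynomial.coeff_mul]
    exact sum_mem fun c _ => mul_mem (hp c.1) (hq c.2)

lemma le_polySubring (R : Subring T) (x : T) : R ≤ polySubring R x := by
  intro r hr
  refine ⟨Polynomial.C r, fun i => ?_, by simp⟩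
  rw [Polynomial.coeff_C]
  split
  · exact hr
  · exact R.zero_mem

lemma mem_polySubring_self (R : Subring T) (x : T) : x ∈ polySubring R x := by
  refine ⟨Polynomial.X, fun i => ?_, by simp⟩
  rw [Polynomial.coeff_X]
  split
  · exact R.one_mem
  · exact R.zero_mem

/-- The fold lemma. -/
lemma fold_lemma {R : Subring T} (hic : ∀ y : T, IntegralOver R y → y ∈ R) (b : T) :
    ∀ d : ℕ, ∀ g : Polynomial T, g.natDegree ≤ d → (∀ i, g.coeff i ∈ R) →
      g.coeff 1 = -1 → g.eval b = 0 →
      ∃ c₀ ∈ R, ∃ c₂ ∈ R, c₂ * b ^ 2 - b + c₀ = 0 := by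
  have base : ∀ g : Polynomial T, g.natDegree ≤ 2 → (∀ i, g.coeff i ∈ R) →
      g.coeff 1 = -1 → g.eval b = 0 →
      ∃ c₀ ∈ R, ∃ c₂ ∈ R, c₂ * b ^ 2 - b + c₀ = 0 := by
    intro g hdeg hcoef h1 hev
    have hev3 : g.eval b = ∑ i ∈ Finset.range 3, g.coeff i * b ^ i :=
      Polynomial.eval_eq_sum_range' (by omega) b
    rw [Finset.sum_range_succ, Finset.sum_range_succ, Finset.sum_range_one, h1] at hev3
    refine ⟨g.coeff 0, hcoef 0, g.coeff 2, hcoef 2, ?_⟩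
    rw [hev] at hev3
    linear_combination -hev3
  intro d
  induction d with
  | zero => intro g hdeg hcoef h1 hev; exact base g (by omega) hcoef h1 hev
  | succ d ih =>
    intro g hdeg hcoef h1 hev
    by_cases hdle : g.natDegree ≤ d
    · exact ih g hdle hcoef h1 hev
    by_cases h2 : g.natDegree ≤ 2
    · exact base g h2 hcoef h1 hev
    push_neg at hdle h2
    have hm : g.natDegree = d + 1 := by omega
    have hd2 : 2 ≤ d := by omega
    set m := g.natDegree with hmdef
    set c := g.coeff m with hc
    -- y = c * b is in R since it is integral over R
    have hy : c * b ∈ R := by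
      apply hic
      refine ⟨X ^ m + ∑ i ∈ Finset.range m, C (g.coeff i * c ^ (m - 1 - i)) * X ^ i,
        ?_, ?_, ?_⟩
      · have hmm : m = (m - 1) + 1 := by omega
        rw [hmm]
        apply Polynomial.monic_X_pow_add
        refine lt_of_le_of_lt (Polynomial.degree_sum_le _ _) ?_
        rw [Finset.sup_lt_iff (by exact_mod_cast WithBot.bot_lt_coe _)]
        intro i hi
        rw [Finset.mem_range, ← hmm] at hi
        have hb1 : (C (g.coeff i * c ^ (m - 1 - i)) * X ^ i).degree ≤ (i : WithBot ℕ) := by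
          rw [Polynomial.C_mul_X_pow_eq_monomial]
          exact Polynomial.degree_monomial_le _ _
        refine lt_of_le_of_lt hb1 ?_
        exact_mod_cast (by omega : i < m - 1 + 1)
      · intro j
        rw [Polynomial.coeff_add, Polynomial.coeff_X_pow, Polynomial.finset_sum_coeff]
        refine add_mem ?_ (sum_mem fun i _ => ?_)
        · split
          · exact R.one_mem
          · exact R.zero_mem
        · rw [Polynomial.C_mul_X_pow_eq_monomial, Polynomial.coeff_monomial]
          split
          · exact mul_mem (hcoef i) (pow_mem (hcoef m) _)
          · exact R.zero_mem
      · rw [Polynomial.eval_add, Polynomial.eval_pow, Polynomial.eval_X,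
          Polynomial.eval_finset_sum]
        have hgev : g.eval b = ∑ i ∈ Finset.range (m + 1), g.coeff i * b ^ i :=
          Polynomial.eval_eq_sum_range b
        have hterms : ∀ i ∈ Finset.range m,
            Polynomial.eval (c * b) (C (g.coeff i * c ^ (m - 1 - i)) * X ^ i)
            = c ^ (m - 1) * (g.coeff i * b ^ i) := by
          intro i hi
          rw [Finset.mem_range] at hi
          rw [Polynomial.eval_mul, Polynomial.eval_C, Polynomial.eval_pow,
            Polynomial.eval_X, mul_pow]
          have hpw : c ^ (m - 1 - i) * c ^ i = c ^ (m - 1) := by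
            rw [← pow_add]; congr 1; omega
          linear_combination (g.coeff i * b ^ i) * hpw
        rw [Finset.sum_congr rfl hterms, ← Finset.mul_sum]
        have hcm : c ^ (m - 1) * c = c ^ m := by
          rw [← pow_succ]; congr 1; omega
        have hsum : (∑ i ∈ Finset.range m, g.coeff i * b ^ i) = g.eval b - c * b ^ m := by
          rw [hgev, Finset.sum_range_succ, ← hc]; ring
        rw [hsum, hev, mul_pow]
        linear_combination (-(b ^ m)) * hcm
    -- fold: replace g by g' of smaller degree
    set g' := g.eraseLead + C (c * b) * X ^ d with hg'
    have hcoef' : ∀ i, g'.coeff i ∈ R := by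
      intro i
      rw [hg', Polynomial.coeff_add, Polynomial.eraseLead_coeff,
        Polynomial.C_mul_X_pow_eq_monomial, Polynomial.coeff_monomial]
      refine add_mem ?_ ?_
      · split
        · exact R.zero_mem
        · exact hcoef i
      · split
        · exact hy
        · exact R.zero_mem
    have h1' : g'.coeff 1 = -1 := by
      rw [hg', Polynomial.coeff_add, Polynomial.eraseLead_coeff,
        Polynomial.C_mul_X_pow_eq_monomial, Polynomial.coeff_monomial]
      rw [if_neg (by omega), if_neg (by omega), h1]
      ring
    have hdeg' : g'.natDegree ≤ d := by
      refine le_trans (Polynomial.natDegree_add_le _ _) ?_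
      refine max_le ?_ ?_
      · exact le_trans (Polynomial.eraseLead_natDegree_le g) (by omega)
      · rw [Polynomial.C_mul_X_pow_eq_monomial]
        exact le_trans (Polynomial.natDegree_monomial_le _) (by omega)
    have hev' : g'.eval b = 0 := by
      have herase := Polynomial.eraseLead_add_C_mul_X_pow g
      have hev2 : g.eraseLead.eval b = g.eval b - c * b ^ m := by
        have := congrArg (Polynomial.eval b) herase
        rw [Polynomial.eval_add, Polynomial.eval_mul, Polynomial.eval_C,
          Polynomial.eval_pow, Polynomial.eval_X] at this
        have hlc : g.leadingCoeff = c := rfl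
        rw [hlc] at this
        linear_combination this
      rw [hg', Polynomial.eval_add, Polynomial.eval_mul, Polynomial.eval_C,
        Polynomial.eval_pow, Polynomial.eval_X, hev2, hev]
      have hbm : b ^ m = b * b ^ d := by
        rw [hm]; ring
      rw [hbm]
      ring
    exact ih g' hdeg' hcoef' h1' hev'

end Helpers

section Helpers2
open Polynomial
variable {T : Type*} [CommRing T]

lemma mem_polySubring_iff {R : Subring T} {x y : T} :
    y ∈ polySubring R x ↔ ∃ p : Polynomial T, (∀ i, p.coeff i ∈ R) ∧ Polynomial.eval x p = y :=
  Iff.rfl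

/-- Step 1: for any `t`, produce `j₀ ∈ R` with `j₀ * t ∈ R` and `(1 - j₀ * t) * t ∈ R`. -/
lemma step1 {R : Subring T} (hnp : IsNormalPairWithin R ⊤) [Nontrivial T] (t : T) :
    ∃ j₀ ∈ R, j₀ * t ∈ R ∧ (1 - j₀ * t) * t ∈ R := by
  have hic : ∀ y : T, IntegralOver R y → y ∈ R := fun y hy =>
    hnp R le_rfl le_top y trivial hy
  -- t ∈ R[t²]
  have htW : t ∈ polySubring R (t ^ 2) := by
    apply hnp (polySubring R (t ^ 2)) (le_polySubring R _) le_top t trivial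
    refine ⟨X ^ 2 - C (t ^ 2), Polynomial.monic_X_pow_sub_C _ (by norm_num), ?_, by simp⟩
    intro j
    rw [Polynomial.coeff_sub, Polynomial.coeff_X_pow, Polynomial.coeff_C]
    refine sub_mem ?_ ?_
    · split
      · exact (polySubring R (t ^ 2)).one_mem
      · exact (polySubring R (t ^ 2)).zero_mem
    · split
      · exact mem_polySubring_self R _
      · exact (polySubring R (t ^ 2)).zero_mem
  rw [mem_polySubring_iff] at htW
  obtain ⟨q, hq, hqe⟩ := htW
  -- build the relation polynomial g with g.eval t = 0 and g.coeff 1 = -1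
  set g : Polynomial T := (∑ i ∈ q.support, C (q.coeff i) * X ^ (2 * i)) - X with hg
  have hgc : ∀ i, g.coeff i ∈ R := by
    intro j
    rw [hg, Polynomial.coeff_sub, Polynomial.finset_sum_coeff]
    refine sub_mem (sum_mem fun i _ => ?_) ?_
    · rw [Polynomial.C_mul_X_pow_eq_monomial, Polynomial.coeff_monomial]
      split
      · exact hq i
      · exact R.zero_mem
    · rw [Polynomial.coeff_X]
      split
      · exact R.one_mem
      · exact R.zero_mem
  have hg1 : g.coeff 1 = -1 := by
    rw [hg, Polynomial.coeff_sub, Polynomial.finset_sum_coeff, Polynomial.coeff_X_one]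
    rw [Finset.sum_eq_zero, zero_sub]
    intro i _
    rw [Polynomial.C_mul_X_pow_eq_monomial, Polynomial.coeff_monomial, if_neg (by omega)]
  have hge : g.eval t = 0 := by
    rw [hg, Polynomial.eval_sub, Polynomial.eval_X, Polynomial.eval_finset_sum]
    have : ∀ i ∈ q.support, Polynomial.eval t (C (q.coeff i) * X ^ (2 * i))
        = q.coeff i * (t ^ 2) ^ i := by
      intro i _
      rw [Polynomial.eval_mul, Polynomial.eval_C, Polynomial.eval_pow, Polynomial.eval_X,
        pow_mul]
    rw [Finset.sum_congr rfl this]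
    have : Polynomial.eval (t ^ 2) q = ∑ i ∈ q.support, q.coeff i * (t ^ 2) ^ i := by
      rw [Polynomial.eval_eq_sum, Polynomial.sum_def]
    rw [← this, hqe, sub_self]
  obtain ⟨c₀, hc₀, c₂, hc₂, hrel⟩ := fold_lemma hic t g.natDegree g le_rfl hgc hg1 hge
  -- e = c₂ * t ∈ R
  have he : c₂ * t ∈ R := by
    apply hic
    refine ⟨X ^ 2 + (C (c₂ * c₀) - X), ?_, ?_, ?_⟩
    · apply Polynomial.monic_X_pow_add
      refine lt_of_le_of_lt (Polynomial.degree_sub_le _ _) ?_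
      rw [Polynomial.degree_X]
      refine max_lt (lt_of_le_of_lt (Polynomial.degree_C_le) ?_) ?_
      · exact_mod_cast (by norm_num : (0:ℕ) < 2)
      · exact_mod_cast (by norm_num : (1:ℕ) < 2)
    · intro j
      rw [Polynomial.coeff_add, Polynomial.coeff_X_pow, Polynomial.coeff_sub,
        Polynomial.coeff_C, Polynomial.coeff_X]
      refine add_mem ?_ (sub_mem ?_ ?_)
      · split
        · exact R.one_mem
        · exact R.zero_mem
      · split
        · exact mul_mem hc₂ hc₀
        · exact R.zero_mem
      · split
        · exact R.one_mem
        · exact R.zero_mem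
    · rw [Polynomial.eval_add, Polynomial.eval_pow, Polynomial.eval_X, Polynomial.eval_sub,
        Polynomial.eval_C, Polynomial.eval_X]
      linear_combination c₂ * hrel
  refine ⟨c₂, hc₂, he, ?_⟩
  have hkey : (1 - c₂ * t) * t = c₀ := by linear_combination -hrel
  rw [hkey]
  exact hc₀
end Helpers2

section Helpers3
open Polynomial
variable {T : Type*} [CommRing T]

lemma endgame [Nontrivial T] {S : Subring T} {t u v : T} (hu : u ∈ S) (hv : v ∈ S)
    (hut : u * t ∈ S) (hrel : u + v * t = 1) (hint : IntegralOver S t) : t ∈ S := by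
  obtain ⟨p, hm, hc, he⟩ := hint
  set n := p.natDegree with hn
  have hvt : v * t ∈ S := by
    have : v * t = 1 - u := by linear_combination hrel
    rw [this]
    exact sub_mem S.one_mem hu
  have hn1 : 1 ≤ n := by
    by_contra hcon
    have h0 : n = 0 := by omega
    have : p = 1 := hm.natDegree_eq_zero.mp h0
    rw [this] at he
    simp at he
  -- t ^ n = -∑ i < n, coeff i * t ^ i
  have htn : t ^ n = -∑ i ∈ Finset.range n, p.coeff i * t ^ i := by
    have h1 : p.eval t = ∑ i ∈ Finset.range (n + 1), p.coeff i * t ^ i :=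
      Polynomial.eval_eq_sum_range t
    rw [Finset.sum_range_succ, hm.coeff_natDegree, he] at h1
    linear_combination -h1
  -- key : (v*t)^n * t ∈ S
  have hkey : (v * t) ^ n * t ∈ S := by
    have hid : (v * t) ^ n * t
        = ∑ i ∈ Finset.range n, -(p.coeff i * ((v * t) ^ (i + 1) * v ^ (n - 1 - i))) := by
      have h2 : (v * t) ^ n * t = v ^ n * t * t ^ n := by
        rw [mul_pow]; ring
      rw [h2, htn]
      rw [mul_neg, Finset.mul_sum, ← Finset.sum_neg_distrib]
      refine Finset.sum_congr rfl ?_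
      intro i hi
      rw [Finset.mem_range] at hi
      have hvp : v ^ (i + 1) * v ^ (n - 1 - i) = v ^ n := by
        rw [← pow_add]; congr 1; omega
      rw [mul_pow]
      linear_combination (p.coeff i * t ^ (i+1)) * hvp
    rw [hid]
    exact sum_mem fun i _ => neg_mem (mul_mem (hc i)
      (mul_mem (pow_mem hvt _) (pow_mem hv _)))
  -- expand t = t * (u + v*t)^n
  have hexp : t = (∑ k ∈ Finset.range (n + 1), u ^ k * (v * t) ^ (n - k) * (n.choose k : T)) * t := by
    rw [← add_pow, hrel, one_pow, one_mul]
  rw [hexp, Finset.sum_mul]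
  refine sum_mem ?_
  intro k hk
  rcases Nat.eq_zero_or_pos k with h0 | hpos
  · subst h0
    have : u ^ 0 * (v * t) ^ (n - 0) * (n.choose 0 : T) * t
        = ((v * t) ^ n * t) * (n.choose 0 : T) := by
      simp
    rw [this]
    exact mul_mem hkey (natCast_mem S _)
  · obtain ⟨j, rfl⟩ : ∃ j, k = j + 1 := ⟨k - 1, by omega⟩
    have : u ^ (j + 1) * (v * t) ^ (n - (j + 1)) * ((n.choose (j + 1) : ℕ) : T) * t
        = (u ^ j * (v * t) ^ (n - (j + 1)) * ((n.choose (j + 1) : ℕ) : T)) * (u * t) := by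
      ring
    rw [this]
    exact mul_mem (mul_mem (mul_mem (pow_mem hu _) (pow_mem hvt _)) (natCast_mem S _)) hut
end Helpers3

section Helpers4
open Polynomial
variable {G T : Type*} [CommRing T] [Group G] [MulSemiringAction G T]

lemma step2 (hlf : ∀ t : T, (MulAction.orbit G t).Finite)
    (R : Subring T) (hinv : ∀ σ : G, ∀ r ∈ R, σ • r ∈ R)
    {t j₀ : T} (ht : ∀ σ : G, σ • t = t) (hj₀R : j₀ ∈ R)
    (hjt : j₀ * t ∈ R) (hjt2 : (1 - j₀ * t) * t ∈ R) :
    ∃ u v : T, u ∈ R ∧ v ∈ R ∧ u * t ∈ R ∧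
      (∀ σ : G, σ • u = u) ∧ (∀ σ : G, σ • v = v) ∧ u + v * t = 1 := by
  classical
  set Θ : Finset T := (hlf j₀).toFinset with hΘdef
  have hmemΘ : ∀ {θ : T}, θ ∈ Θ ↔ θ ∈ MulAction.orbit G j₀ := fun {θ} =>
    Set.Finite.mem_toFinset _
  have hj₀Θ : j₀ ∈ Θ := hmemΘ.mpr (MulAction.mem_orbit_self j₀)
  have hθR : ∀ θ ∈ Θ, θ ∈ R := by
    intro θ hθ
    obtain ⟨σ, rfl⟩ := hmemΘ.mp hθ
    exact hinv σ j₀ hj₀R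
  have hθtR : ∀ θ ∈ Θ, θ * t ∈ R := by
    intro θ hθ
    obtain ⟨σ, rfl⟩ := hmemΘ.mp hθ
    have : (σ • j₀) * t = σ • (j₀ * t) := by
      rw [smul_mul', ht σ]
    rw [this]
    exact hinv σ _ hjt
  have hΘstab : ∀ (σ : G), ∀ θ ∈ Θ, σ • θ ∈ Θ := by
    intro σ θ hθ
    obtain ⟨τ, hτ⟩ := hmemΘ.mp hθ
    refine hmemΘ.mpr ⟨σ * τ, ?_⟩
    show (σ * τ) • j₀ = σ • θ
    rw [mul_smul, ← hτ]
  -- the `𝒞` predicate and products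
  set pred : Polynomial T → Prop :=
    fun p => (∀ i, p.coeff i * t ^ i ∈ R) ∧ (∀ i, p.coeff (i + 1) * t ^ i ∈ R) with hpreddef
  have hpredmul : ∀ p q : Polynomial T, pred p → pred q → pred (p * q) := by
    rintro p q ⟨hp1, hp2⟩ ⟨hq1, hq2⟩
    constructor
    · intro i
      rw [Polynomial.coeff_mul, Finset.sum_mul]
      refine sum_mem ?_
      intro c hc
      rw [Finset.HasAntidiagonal.mem_antidiagonal] at hc
      have hpow : t ^ i = t ^ c.1 * t ^ c.2 := by rw [← pow_add, hc]
      rw [hpow]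
      have : p.coeff c.1 * q.coeff c.2 * (t ^ c.1 * t ^ c.2)
          = (p.coeff c.1 * t ^ c.1) * (q.coeff c.2 * t ^ c.2) := by ring
      rw [this]
      exact mul_mem (hp1 _) (hq1 _)
    · intro i
      rw [Polynomial.coeff_mul, Finset.sum_mul]
      refine sum_mem ?_
      intro c hc
      rw [Finset.HasAntidiagonal.mem_antidiagonal] at hc
      rcases Nat.eq_zero_or_pos c.1 with h0 | hpos
      · have hc2 : c.2 = i + 1 := by omega
        have : p.coeff c.1 * q.coeff c.2 * t ^ i
            = p.coeff 0 * (q.coeff (i + 1) * t ^ i) := by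
          rw [h0, hc2]; ring
        rw [this]
        have hp0 : p.coeff 0 ∈ R := by
          have := hp1 0
          rwa [pow_zero, mul_one] at this
        exact mul_mem hp0 (hq2 i)
      · obtain ⟨a, ha⟩ : ∃ a, c.1 = a + 1 := ⟨c.1 - 1, by omega⟩
        have hsum : a + c.2 = i := by omega
        have hpow : t ^ i = t ^ a * t ^ c.2 := by rw [← pow_add, hsum]
        rw [ha, hpow]
        have : p.coeff (a + 1) * q.coeff c.2 * (t ^ a * t ^ c.2)
            = (p.coeff (a + 1) * t ^ a) * (q.coeff c.2 * t ^ c.2) := by ring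
        rw [this]
        exact mul_mem (hp2 _) (hq1 _)
  have hpredone : pred 1 := by
    constructor
    · intro i
      rw [Polynomial.coeff_one]
      split
      · next h => subst h; simpa using R.one_mem
      · simpa using R.zero_mem
    · intro i
      rw [Polynomial.coeff_one, if_neg (by omega)]
      simpa using R.zero_mem
  have hpredbase : ∀ θ ∈ Θ, pred (1 - C θ * X) := by
    intro θ hθ
    have hco : ∀ j, (1 - C θ * X).coeff j = if j = 0 then 1 else if j = 1 then -θ else 0 := by
      intro j
      rcases j with _ | j
      · simp [Polynomial.coeff_one, Polynomial.coeff_C_mul, Polynomial.coeff_X]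
      · rcases j with _ | j
        · simp [Polynomial.coeff_one, Polynomial.coeff_C_mul, Polynomial.coeff_X]
        · simp [Polynomial.coeff_one, Polynomial.coeff_C_mul, Polynomial.coeff_X]
    constructor
    · intro i
      rw [hco i]
      rcases i with _ | i
      · simpa using R.one_mem
      · rcases i with _ | i
        · rw [if_neg (by omega), if_pos rfl]
          have : -θ * t ^ 1 = -(θ * t) := by ring
          rw [this]
          exact neg_mem (hθtR θ hθ)
        · rw [if_neg (by omega), if_neg (by omega)]
          simpa using R.zero_mem
    · intro i
      rw [hco (i + 1)]
      rcases i with _ | i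
      · rw [if_neg (by omega), if_pos rfl]
        have : -θ * t ^ 0 = -θ := by ring
        rw [this]
        exact neg_mem (hθR θ hθ)
      · rw [if_neg (by omega), if_neg (by omega)]
        simpa using R.zero_mem
  have hCprod : ∀ s : Finset T, s ⊆ Θ → pred (∏ θ ∈ s, (1 - C θ * X)) := by
    intro s hs
    exact Finset.prod_induction _ pred hpredmul hpredone (fun θ hθ => hpredbase θ (hs hθ))
  -- evaluation membership helper
  have evalmem : ∀ p : Polynomial T, (∀ i, p.coeff i * t ^ i ∈ R) → p.eval t ∈ R := by
    intro p hp
    rw [Polynomial.eval_eq_sum, Polynomial.sum_def]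
    exact sum_mem fun i _ => hp i
  set F : Polynomial T := ∏ θ ∈ Θ, (1 - C θ * X) with hFdef
  have hCF : pred F := hCprod Θ (subset_refl _)
  set P : T := F.eval t with hPdef
  set Q : Polynomial T := (1 - F).divX with hQdef
  set v : T := Q.eval t with hvdef
  -- memberships
  have hPmem : P ∈ R := evalmem F hCF.1
  have hvmem : v ∈ R := by
    refine evalmem Q ?_
    intro i
    rw [hQdef, Polynomial.coeff_divX, Polynomial.coeff_sub, Polynomial.coeff_one,
      if_neg (by omega)]
    have : (0 - F.coeff (i + 1)) * t ^ i = -(F.coeff (i + 1) * t ^ i) := by ring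
    rw [this]
    exact neg_mem (hCF.2 i)
  have hPt : P * t ∈ R := by
    have hsplit : F = (1 - C j₀ * X) * ∏ θ ∈ Θ.erase j₀, (1 - C θ * X) :=
      (Finset.mul_prod_erase Θ _ hj₀Θ).symm
    have hP' : (∏ θ ∈ Θ.erase j₀, (1 - C θ * X)).eval t ∈ R :=
      evalmem _ (hCprod _ (Finset.erase_subset _ _)).1
    have : P * t = ((1 - j₀ * t) * t) * (∏ θ ∈ Θ.erase j₀, (1 - C θ * X)).eval t := by
      rw [hPdef, hsplit, Polynomial.eval_mul]
      have : (1 - C j₀ * X).eval t = 1 - j₀ * t := by simp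
      rw [this]
      ring
    rw [this]
    exact mul_mem hjt2 hP'
  -- invariance
  have evalinv : ∀ (p : Polynomial T) (σ : G),
      p.map (MulSemiringAction.toRingHom G T σ) = p → σ • p.eval t = p.eval t := by
    intro p σ hmap
    have h := Polynomial.smul_eval_smul T σ p t
    rw [ht σ] at h
    have h2 : σ • p = p := by
      rw [Polynomial.smul_eq_map]
      exact hmap
    rw [h2] at h
    exact h.symm
  have hFinv : ∀ σ : G, F.map (MulSemiringAction.toRingHom G T σ) = F := by
    intro σ
    set φ := MulSemiringAction.toRingHom G T σ with hφ
    rw [hFdef, Polynomial.map_prod]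
    refine Finset.prod_bij' (fun θ _ => σ • θ) (fun θ _ => σ⁻¹ • θ)
      (fun θ hθ => hΘstab σ θ hθ) (fun θ hθ => hΘstab σ⁻¹ θ hθ)
      (fun θ hθ => inv_smul_smul σ θ) (fun θ hθ => smul_inv_smul σ θ) ?_
    intro θ hθ
    rw [Polynomial.map_sub, Polynomial.map_one, Polynomial.map_mul, Polynomial.map_C,
      Polynomial.map_X]
    rfl
  have hPinv : ∀ σ : G, σ • P = P := fun σ => evalinv F σ (hFinv σ)
  have hQinv : ∀ σ : G, σ • v = v := by
    intro σ
    refine evalinv Q σ ?_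
    set φ := MulSemiringAction.toRingHom G T σ with hφ
    have h1F : (1 - F).map φ = 1 - F := by
      rw [Polynomial.map_sub, Polynomial.map_one, hFinv σ]
    ext i
    rw [Polynomial.coeff_map]
    have hQc : Q.coeff i = (1 - F).coeff (i + 1) := by
      rw [hQdef, Polynomial.coeff_divX]
    rw [hQc]
    have h3 := congrArg (fun p : Polynomial T => p.coeff (i + 1)) h1F
    simp only [Polynomial.coeff_map] at h3
    exact h3
  -- the relation  P + v * t = 1
  have hF0 : F.coeff 0 = 1 := by
    rw [Polynomial.coeff_zero_eq_eval_zero, hFdef, Polynomial.eval_prod]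
    rw [Finset.prod_eq_one]
    intro θ _
    simp
  have hXQ : X * Q = 1 - F := by
    have := Polynomial.X_mul_divX_add (1 - F)
    rw [← hQdef] at this
    have h0 : (1 - F).coeff 0 = 0 := by
      rw [Polynomial.coeff_sub, Polynomial.coeff_one, if_pos rfl, hF0, sub_self]
    rw [h0, map_zero, add_zero] at this
    exact this
  have hrel : P + v * t = 1 := by
    have := congrArg (Polynomial.eval t) hXQ
    rw [Polynomial.eval_mul, Polynomial.eval_X, Polynomial.eval_sub, Polynomial.eval_one] at this
    rw [← hvdef, ← hPdef] at this
    linear_combination this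
  exact ⟨P, v, hPmem, hvmem, hPt, hPinv, hQinv, hrel⟩

end Helpers4

/-- if `G` is locally finite and `(R, T)` is a normal pair, then
`(R^G, T^G)` is a normal pair. -/
theorem stmt16 (G T : Type*) [CommRing T] [Group G] [MulSemiringAction G T]
    (hlf : ∀ t : T, (MulAction.orbit G t).Finite)
    (R : Subring T) (hinv : ∀ σ : G, ∀ r ∈ R, σ • r ∈ R)
    (hnp : IsNormalPairWithin R ⊤) :
    IsNormalPairWithin (R ⊓ fixedSubring G T) (fixedSubring G T) := by
  intro S hRS hSF t htF hint
  by_cases h10 : (1 : T) = 0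
  · have ht0 : t = 0 := by
      calc t = t * 1 := (mul_one t).symm
        _ = t * 0 := by rw [h10]
        _ = 0 := mul_zero t
    rw [ht0]
    exact S.zero_mem
  have : Nontrivial T := nontrivial_of_ne 1 0 h10
  have ht : ∀ σ : G, σ • t = t := MulAction.mem_fixedPoints.mp htF
  obtain ⟨j₀, hj₀R, hjt, hjt2⟩ := step1 hnp t
  obtain ⟨u, v, huR, hvR, hutR, huinv, hvinv, hrel⟩ := step2 hlf R hinv ht hj₀R hjt hjt2
  have hmemS : ∀ {x : T}, x ∈ R → (∀ σ : G, σ • x = x) → x ∈ S := by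
    intro x hxR hxinv
    apply hRS
    rw [Subring.mem_inf]
    exact ⟨hxR, MulAction.mem_fixedPoints.mpr hxinv⟩
  have huS : u ∈ S := hmemS huR huinv
  have hvS : v ∈ S := hmemS hvR hvinv
  have hutS : u * t ∈ S := hmemS hutR (fun σ => by rw [smul_mul', huinv σ, ht σ])
  exact endgame huS hvS hutS hrel hint
end

section
/- Let F be a field with char(F) ≠ 2, R = {(x, x) : x ∈ F} ⊂ T = F × F, and G = {1, σ} where σ(a, b) = (a, −b). Then R is G-invariant, R ⊂ T is a minimal ring extension, and R^G = T^G (so the fixed-ring extension is not proper). -/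
/-- for a field `F` with `char F ≠ 2`, the diagonal subring
`R = {(x, x)} ⊂ T = F × F` is a minimal ring extension (Ferrand–Olivier), and
for `σ(a, b) = (a, -b)` the fixed set `T^G` is `F × {0}`, while
`R^G = R ∩ T^G` (so the fixed-ring extension is not proper). -/
theorem stmt19 (F : Type*) [Field F] (hchar : (2 : F) ≠ 0)
    (R : Subring (F × F)) (hR : ∀ p : F × F, p ∈ R ↔ p.1 = p.2)
    (σ : F × F → F × F) (hσ : ∀ p, σ p = (p.1, -p.2)) :
    IsMinimalPair R ⊤ ∧
    {p : F × F | σ p = p} = {p : F × F | p.2 = 0} ∧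
    {p : F × F | p ∈ R ∧ σ p = p} = ↑R ∩ {p : F × F | p.2 = 0} := by
  have hfix : ∀ p : F × F, σ p = p ↔ p.2 = 0 := by
    intro p
    rw [hσ, Prod.ext_iff]
    constructor
    · rintro ⟨-, h⟩
      have h2 : (2 : F) * p.2 = 0 := by ring_nf; linear_combination -h
      rcases mul_eq_zero.mp h2 with h | h
      · exact absurd h hchar
      · exact h
    · rintro h
      simp [h]
  refine ⟨⟨⟨le_top, ?_⟩, ?_⟩, ?_, ?_⟩
  · intro hle
    have : ((1 : F), (0 : F)) ∈ R := hle (Subring.mem_top _)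
    rw [hR] at this
    exact one_ne_zero this
  · intro S hRS _
    by_cases hSR : S ≤ R
    · exact Or.inl (le_antisymm hSR hRS)
    · right
      rw [SetLike.not_le_iff_exists] at hSR
      obtain ⟨p, hpS, hpR⟩ := hSR
      rw [hR] at hpR
      have hc : p.2 - p.1 ≠ 0 := sub_ne_zero.mpr (Ne.symm hpR)
      have hdiag : ∀ x : F, ((x, x) : F × F) ∈ S := by
        intro x
        exact hRS ((hR (x, x)).mpr rfl)
      have h0c : ((0 : F), p.2 - p.1) ∈ S := by
        have := S.sub_mem hpS (hdiag p.1)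
        have heq : p - ((p.1, p.1) : F × F) = (0, p.2 - p.1) := by ext <;> simp
        rwa [heq] at this
      have h0 : ∀ b : F, ((0 : F), b) ∈ S := by
        intro b
        have := S.mul_mem (hdiag (b / (p.2 - p.1))) h0c
        have heq : ((b / (p.2 - p.1), b / (p.2 - p.1)) : F × F) * (0, p.2 - p.1)
            = ((0 : F), b) := by
          ext <;> simp [div_mul_cancel₀, hc]
        rwa [heq] at this
      rw [eq_top_iff]
      intro q _
      have : ((q.1, q.1) : F × F) + (0, q.2 - q.1) = q := by ext <;> simp
      rw [← this]
      exact S.add_mem (hdiag q.1) (h0 _)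
  · ext p
    simpa using hfix p
  · ext p
    simp only [Set.mem_setOf_eq, Set.mem_inter_iff, SetLike.mem_coe, hfix p]
end
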